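/- arXiv:2509.17705 — 6 statements merged into one kernel-verified Lean document; each statement's English description precedes it below -/
import Mathlib

section
/- For all nonnegative integers t, α and all n ≥ 0, the number of overpartition t-tuples satisfies p̄_t(2^{2α+2}·n + 2^{2α+1}) ≡ 0 (mod 4). -/
/-!
An overpartition of `m > 0` is counted with weight `2 ^ k`, where `k ≥ 1` is the number of distinct
part sizes, so `p̄(m)` is even, and modulo `4` only the partitions with a single part size survive:
these are `d ^ (m / d)` for `d ∣ m`, whence `p̄(m) ≡ 2 d(m) (mod 4)`. For `N = 2 ^ (2α+1) (2n+1)` the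
divisor count `(2α+2) d(2n+1)` is even, so `4 ∣ p̄(N)`. In a `t`-tuple of overpartitions of `N`,
either two components are nonempty, contributing two factors of `2`, or one component carries all
of `N`.
-/

/-- The number of overpartitions of `n`: a partition of `n` together with a
choice of which distinct part values are overlined (the first occurrence of a
part value may be overlined), so that the count is `∑_{λ ⊢ n} 2^{#distinct parts of λ}`. -/
def overpartitionCount (n : ℕ) : ℕ :=
  ∑ p : n.Partition, 2 ^ p.parts.toFinset.card

/-- The number of overpartition `t`-tuples of `n`: `t`-tuples of overpartitions
whose sizes sum to `n`. -/
def overpartitionTuples (t n : ℕ) : ℕ :=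
  ∑ c ∈ Finset.Nat.antidiagonalTuple t n, ∏ i, overpartitionCount (c i)

open Finset

namespace Nat.Partition

lemma parts_ne_zero {n : ℕ} (hn : n ≠ 0) (p : n.Partition) : p.parts ≠ 0 := fun h ↦
  hn (by rw [← p.parts_sum, h, Multiset.sum_zero])

def replicateDivisor {n d : ℕ} (hd : d ∈ n.divisors) : n.Partition where
  parts := Multiset.replicate (n / d) d
  parts_pos hi := Multiset.eq_of_mem_replicate hi ▸ Nat.pos_of_mem_divisors hd
  parts_sum := by
    rw [Multiset.sum_replicate, smul_eq_mul, Nat.div_mul_cancel (Nat.dvd_of_mem_divisors hd)]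

lemma toFinset_parts_replicateDivisor {n d : ℕ} (hd : d ∈ n.divisors) :
    (replicateDivisor hd).parts.toFinset = {d} := by
  have hdn : n / d ≠ 0 := (Nat.div_pos (Nat.divisor_le hd) (Nat.pos_of_mem_divisors hd)).ne'
  simp [replicateDivisor, hdn]

lemma card_filter_card_toFinset_parts_eq_one (n : ℕ) :
    #{p : n.Partition | #p.parts.toFinset = 1} = #n.divisors := by
  refine (card_bij (fun d hd ↦ replicateDivisor hd) (fun d hd ↦ ?_) (fun d hd d' hd' h ↦ ?_)
    (fun p hp ↦ ?_)).symm
  · simp [toFinset_parts_replicateDivisor hd]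
  · simpa [toFinset_parts_replicateDivisor] using congrArg (·.parts.toFinset) h
  · obtain ⟨hcard, d, hp⟩ := (Multiset.toFinset_card_eq_one_iff _).mp (mem_filter.mp hp).2
    have hd_pos : 0 < d := p.parts_pos (by rw [hp]; simp [hcard])
    have hn : n = Multiset.card p.parts * d := by
      simpa [p.parts_sum, Multiset.sum_nsmul] using congrArg Multiset.sum hp
    have hd : d ∈ n.divisors :=
      Nat.mem_divisors.mpr ⟨⟨_, hn.trans (mul_comm _ _)⟩, by rw [hn]; positivity⟩
    refine ⟨d, hd, Nat.Partition.ext ?_⟩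
    change Multiset.replicate (n / d) d = p.parts
    rw [Nat.div_eq_of_eq_mul_left hd_pos hn, hp, Multiset.nsmul_singleton]
    simp

end Nat.Partition

lemma overpartitionCount_zero : overpartitionCount 0 = 1 := by decide

lemma two_dvd_overpartitionCount {n : ℕ} (hn : n ≠ 0) : 2 ∣ overpartitionCount n :=
  dvd_sum fun p _ ↦ dvd_pow_self 2 <| by simpa using p.parts_ne_zero hn

lemma overpartitionCount_modEq_two_mul_card_divisors {n : ℕ} (hn : n ≠ 0) :
    overpartitionCount n ≡ 2 * #n.divisors [MOD 4] := by
  classical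
  have hrest : 4 ∣ ∑ p : n.Partition with #p.parts.toFinset ≠ 1, 2 ^ #p.parts.toFinset := by
    refine dvd_sum fun p hp ↦ (pow_dvd_pow 2 ?_ : 2 ^ 2 ∣ _)
    have : #p.parts.toFinset ≠ 0 := by simpa using p.parts_ne_zero hn
    have : #p.parts.toFinset ≠ 1 := (mem_filter.mp hp).2
    omega
  rw [overpartitionCount, ← sum_filter_add_sum_filter_not univ (#·.parts.toFinset = 1),
    sum_congr rfl fun p hp ↦ by rw [(mem_filter.mp hp).2], sum_const, smul_eq_mul,
    Nat.Partition.card_filter_card_toFinset_parts_eq_one, mul_comm]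
  exact (Nat.modEq_zero_iff_dvd.mpr hrest).add_left _

lemma even_card_divisors_pow_mul {p k m : ℕ} (hp : p.Prime) (hk : Odd k) (hpm : ¬p ∣ m) :
    Even #(p ^ k * m).divisors := by
  rw [(Nat.Coprime.pow_left k ((Nat.Prime.coprime_iff_not_dvd hp).mpr hpm)).card_divisors_mul,
    Nat.divisors_prime_pow hp, card_map, card_range]
  exact hk.add_one.mul_right _

lemma sq_dvd_prod_of_sum_eq {ι M : Type*} [Fintype ι] [CommMonoid M] {f : ℕ → M} {a : M}
    (hf0 : f 0 = 1) (hf : ∀ m ≠ 0, a ∣ f m) {N : ℕ} (hN0 : N ≠ 0) (hN : a ^ 2 ∣ f N)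
    {c : ι → ℕ} (hc : ∑ i, c i = N) : a ^ 2 ∣ ∏ i, f (c i) := by
  classical
  obtain ⟨i, -, hi⟩ := exists_ne_zero_of_sum_ne_zero (hc.trans_ne hN0)
  by_cases hj : ∃ j ≠ i, c j ≠ 0
  · obtain ⟨j, hji, hj⟩ := hj
    calc a ^ 2 = a * a := sq a
      _ ∣ f (c i) * f (c j) := mul_dvd_mul (hf _ hi) (hf _ hj)
      _ = ∏ k ∈ {i, j}, f (c k) := (prod_pair (f := fun k ↦ f (c k)) hji.symm).symm
      _ ∣ ∏ k, f (c k) := prod_dvd_prod_of_subset _ _ _ (subset_univ _)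
  · push Not at hj
    have hci : c i = N := by rw [← hc, Fintype.sum_eq_single i hj]
    rwa [Fintype.prod_eq_single i fun j hji ↦ by rw [hj j hji, hf0], hci]

theorem overpartitionTuples_pow_two_mod_four (t α n : ℕ) :
    overpartitionTuples t (2 ^ (2 * α + 2) * n + 2 ^ (2 * α + 1)) ≡ 0 [MOD 4] := by
  set N := 2 ^ (2 * α + 2) * n + 2 ^ (2 * α + 1)
  have hN : N = 2 ^ (2 * α + 1) * (2 * n + 1) := by ring
  have hN0 : N ≠ 0 := by positivity
  have hcount : 2 ^ 2 ∣ overpartitionCount N := by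
    obtain ⟨k, hk⟩ : Even #N.divisors := by
      rw [hN]
      exact even_card_divisors_pow_mul Nat.prime_two (odd_two_mul_add_one α) (by omega)
    refine Nat.modEq_zero_iff_dvd.mp ((overpartitionCount_modEq_two_mul_card_divisors hN0).trans ?_)
    rw [hk, Nat.modEq_zero_iff_dvd]
    exact ⟨k, by ring⟩
  rw [Nat.modEq_zero_iff_dvd, overpartitionTuples]
  exact dvd_sum fun c hc ↦ sq_dvd_prod_of_sum_eq overpartitionCount_zero
    (fun _ ↦ two_dvd_overpartitionCount) hN0 hcount (Finset.Nat.mem_antidiagonalTuple.mp hc)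
end

section
/- For all nonnegative integers t, α and all n ≥ 0, the number of overpartition t-tuples satisfies p̄_t(2^{2α+2}·n + 3·2^{2α}) ≡ 0 (mod 4). -/
open Finset

section TupleSums

variable {ι M : Type*} [Fintype ι] [DecidableEq ι]

lemma exists_ne_ne_zero_of_forall_ne_single [AddCommMonoid M] {c : ι → M} {N : M}
    (hc : ∑ i, c i = N) (hN : N ≠ 0) (hsingle : ∀ i, c ≠ Pi.single i N) :
    ∃ i j, i ≠ j ∧ c i ≠ 0 ∧ c j ≠ 0 := by
  obtain ⟨i, -, hi⟩ := Finset.exists_ne_zero_of_sum_ne_zero (hc ▸ hN)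
  refine ⟨i, ?_⟩
  by_contra! hrest
  have hci : c = Pi.single i (c i) := funext fun j => by
    rcases eq_or_ne j i with rfl | hj
    · simp
    · simp [hj, hrest j (Ne.symm hj) hi]
  have : c i = N := by rw [← hc, hci, Fintype.sum_pi_single']; simp
  exact hsingle i (this ▸ hci)

lemma pow_two_dvd_prod_of_ne_zero_of_ne_zero {f : ℕ → ℕ} {d : ℕ} (hf : ∀ m ≠ 0, d ∣ f m)
    {c : ι → ℕ} {i j : ι} (hij : i ≠ j) (hi : c i ≠ 0) (hj : c j ≠ 0) :
    d ^ 2 ∣ ∏ k, f (c k) :=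
  calc d ^ 2 ∣ ∏ k ∈ {i, j}, f (c k) := by
        rw [Finset.prod_pair hij, sq]; exact mul_dvd_mul (hf _ hi) (hf _ hj)
    _ ∣ ∏ k, f (c k) := prod_dvd_prod_of_subset _ _ _ (subset_univ _)

end TupleSums

theorem sum_antidiagonalTuple_prod_modEq {f : ℕ → ℕ} {d N : ℕ} (h0 : f 0 = 1)
    (hf : ∀ m ≠ 0, d ∣ f m) (t : ℕ) (hN : N ≠ 0) :
    ∑ c ∈ Nat.antidiagonalTuple t N, ∏ i, f (c i) ≡ t * f N [MOD d ^ 2] := by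
  set singles := univ.image fun i : Fin t => Pi.single i N
  have hsub : singles ⊆ Nat.antidiagonalTuple t N := by
    intro c hc
    obtain ⟨i, -, rfl⟩ := mem_image.1 hc
    exact Nat.mem_antidiagonalTuple.2 (Fintype.sum_pi_single' i N)
  have hsingles : ∑ c ∈ singles, ∏ i, f (c i) = t * f N := by
    rw [sum_image fun i _ j _ hij =>
      by_contra fun h => hN (by simpa [h] using congrFun hij i)]
    rw [sum_const_nat fun i _ => ?_, card_univ, Fintype.card_fin]
    rw [Fintype.prod_eq_single i fun j hj => by simp [hj, h0]]
    simp
  have hrest : d ^ 2 ∣ ∑ c ∈ Nat.antidiagonalTuple t N \ singles, ∏ i, f (c i) := by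
    refine Finset.dvd_sum fun c hc => ?_
    obtain ⟨hc, hcs⟩ := mem_sdiff.1 hc
    obtain ⟨i, j, hij, hi, hj⟩ :=
      exists_ne_ne_zero_of_forall_ne_single (Nat.mem_antidiagonalTuple.1 hc) hN fun i h =>
        hcs (mem_image.2 ⟨i, mem_univ _, h.symm⟩)
    exact pow_two_dvd_prod_of_ne_zero_of_ne_zero hf hij hi hj
  rw [← sum_sdiff hsub, hsingles]
  simpa using (Nat.modEq_zero_iff_dvd.2 hrest).add_right (t * f N)

namespace Nat.Partition

variable {m : ℕ}

lemma card_toFinset_parts_pos (hm : m ≠ 0) (p : m.Partition) : 0 < p.parts.toFinset.card :=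
  Finset.card_pos.2 <| Multiset.toFinset_nonempty.2 fun h => hm <| by
    rw [← p.parts_sum, h, Multiset.sum_zero]

def ofReplicate (k d : ℕ) (hd : 0 < d) (h : k * d = m) : m.Partition where
  parts := Multiset.replicate k d
  parts_pos hi := Multiset.eq_of_mem_replicate hi ▸ hd
  parts_sum := by rw [Multiset.sum_replicate, smul_eq_mul, h]

variable {p : m.Partition}

lemma card_parts_pos_of_card_toFinset_eq_one (h : p.parts.toFinset.card = 1) :
    0 < p.parts.card :=
  h ▸ Nat.one_pos |>.trans_le (Multiset.toFinset_card_le p.parts)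

lemma parts_eq_replicate_of_card_toFinset_eq_one (h : p.parts.toFinset.card = 1) :
    p.parts = Multiset.replicate p.parts.card (m / p.parts.card) := by
  obtain ⟨d, hd⟩ := Finset.card_eq_one.1 h
  have hrep : p.parts = Multiset.replicate p.parts.card d :=
    Multiset.eq_replicate_card.2 fun x hx => by simpa [hd] using Multiset.mem_toFinset.2 hx
  have hsum : p.parts.card * d = m := by
    conv_rhs => rw [← p.parts_sum, hrep]
    simp
  rwa [Nat.div_eq_of_eq_mul_right (card_parts_pos_of_card_toFinset_eq_one h) hsum.symm]

lemma card_parts_mul_div_eq_of_card_toFinset_eq_one (h : p.parts.toFinset.card = 1) :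
    p.parts.card * (m / p.parts.card) = m := by
  conv_rhs => rw [← p.parts_sum, parts_eq_replicate_of_card_toFinset_eq_one h]
  simp

noncomputable def transposeRect (p : m.Partition) : m.Partition :=
  if h : p.parts.toFinset.card = 1 then
    ofReplicate (m / p.parts.card) p.parts.card (card_parts_pos_of_card_toFinset_eq_one h)
      ((Nat.mul_comm _ _).trans (card_parts_mul_div_eq_of_card_toFinset_eq_one h))
  else p

lemma div_card_parts_pos_of_card_toFinset_eq_one (h : p.parts.toFinset.card = 1) :
    0 < m / p.parts.card := by
  obtain ⟨x, hx⟩ := Multiset.card_pos_iff_exists_mem.1 (card_parts_pos_of_card_toFinset_eq_one h)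
  have hxm := hx
  rw [parts_eq_replicate_of_card_toFinset_eq_one h] at hxm
  exact Multiset.eq_of_mem_replicate hxm ▸ p.parts_pos hx

lemma parts_transposeRect (h : p.parts.toFinset.card = 1) :
    (transposeRect p).parts = Multiset.replicate (m / p.parts.card) p.parts.card := by
  rw [transposeRect, dif_pos h]
  rfl

lemma transposeRect_of_card_toFinset_ne_one (h : p.parts.toFinset.card ≠ 1) :
    transposeRect p = p :=
  dif_neg h

lemma card_toFinset_parts_transposeRect :
    (transposeRect p).parts.toFinset.card = p.parts.toFinset.card := by
  by_cases h : p.parts.toFinset.card = 1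
  · rw [parts_transposeRect h, Multiset.toFinset_replicate,
      if_neg (div_card_parts_pos_of_card_toFinset_eq_one h).ne', card_singleton, h]
  · rw [transposeRect_of_card_toFinset_ne_one h]

lemma transposeRect_transposeRect (p : m.Partition) : transposeRect (transposeRect p) = p := by
  by_cases h : p.parts.toFinset.card = 1
  · have h' := card_toFinset_parts_transposeRect.trans h
    have hdiv : m / (m / p.parts.card) = p.parts.card :=
      Nat.div_eq_of_eq_mul_right (div_card_parts_pos_of_card_toFinset_eq_one h)
        ((Nat.mul_comm _ _).trans (card_parts_mul_div_eq_of_card_toFinset_eq_one h)).symm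
    ext1
    rw [parts_transposeRect h', parts_transposeRect h, Multiset.card_replicate, hdiv,
      ← parts_eq_replicate_of_card_toFinset_eq_one h]
  · rw [transposeRect_of_card_toFinset_ne_one h, transposeRect_of_card_toFinset_ne_one h]

lemma isSquare_of_transposeRect_eq_self (h : p.parts.toFinset.card = 1)
    (hfix : transposeRect p = p) : IsSquare m := by
  have hcard := congrArg (Multiset.card ∘ parts) hfix
  simp only [Function.comp_apply, parts_transposeRect h, Multiset.card_replicate] at hcard
  exact ⟨p.parts.card,
    (card_parts_mul_div_eq_of_card_toFinset_eq_one h).symm.trans (congrArg _ hcard)⟩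

end Nat.Partition

lemma two_dvd_overpartitionCount_s2 {m : ℕ} (hm : m ≠ 0) : 2 ∣ overpartitionCount m :=
  Finset.dvd_sum fun p _ => dvd_pow_self 2 (p.card_toFinset_parts_pos hm).ne'

lemma four_dvd_overpartitionCount {m : ℕ} (hm : m ≠ 0) (hsq : ¬ IsSquare m) :
    4 ∣ overpartitionCount m := by
  have two_pow_eq_zero {c : ℕ} (hc : 2 ≤ c) : (2 : ZMod 4) ^ c = 0 := by
    obtain ⟨c, rfl⟩ := Nat.exists_eq_add_of_le hc
    rw [pow_add, show (2 : ZMod 4) ^ 2 = 0 by decide, zero_mul]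
  rw [← ZMod.natCast_eq_zero_iff, overpartitionCount]
  push_cast
  refine sum_ninvolution Nat.Partition.transposeRect (fun p => ?_) (fun p hp hfix => ?_)
    (fun _ => mem_univ _) Nat.Partition.transposeRect_transposeRect
  · rw [Nat.Partition.card_toFinset_parts_transposeRect, ← two_mul, ← pow_succ']
    exact two_pow_eq_zero (by have := p.card_toFinset_parts_pos hm; omega)
  · refine hsq (Nat.Partition.isSquare_of_transposeRect_eq_self ?_ hfix)
    by_contra hne
    exact hp (two_pow_eq_zero (by have := p.card_toFinset_parts_pos hm; omega))

lemma Nat.not_isSquare_of_mod_four_eq_three {m : ℕ} (h : m % 4 = 3) : ¬ IsSquare m := by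
  rintro ⟨r, rfl⟩
  have : r % 4 < 4 := Nat.mod_lt _ (by norm_num)
  interval_cases hr : r % 4 <;> simp [Nat.mul_mod, hr] at h

lemma Nat.isSquare_of_isSquare_four_mul {m : ℕ} (h : IsSquare (4 * m)) : IsSquare m := by
  obtain ⟨r, hr⟩ := h
  obtain ⟨s, rfl⟩ : 2 ∣ r := (Nat.prime_two.dvd_mul.1 ⟨2 * m, by rw [← hr]; ring⟩).elim id id
  exact ⟨s, by linarith⟩

lemma Nat.not_isSquare_four_pow_mul_four_mul_add_three (α n : ℕ) :
    ¬ IsSquare (4 ^ α * (4 * n + 3)) := by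
  induction α with
  | zero => simpa using Nat.not_isSquare_of_mod_four_eq_three (by omega)
  | succ α ih =>
    exact fun h => ih (Nat.isSquare_of_isSquare_four_mul (by rwa [pow_succ', mul_assoc] at h))

lemma overpartitionTuples_modEq {N : ℕ} (t : ℕ) (hN : N ≠ 0) :
    overpartitionTuples t N ≡ t * overpartitionCount N [MOD 4] :=
  sum_antidiagonalTuple_prod_modEq overpartitionCount_zero (fun _ => two_dvd_overpartitionCount_s2)
    t hN

theorem overpartitionTuples_three_pow_two_mod_four (t α n : ℕ) :
    overpartitionTuples t (2 ^ (2 * α + 2) * n + 3 * 2 ^ (2 * α)) ≡ 0 [MOD 4] := by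
  have hN : 2 ^ (2 * α + 2) * n + 3 * 2 ^ (2 * α) = 4 ^ α * (4 * n + 3) := by
    rw [show (4 : ℕ) ^ α = 2 ^ (2 * α) by rw [pow_mul]; norm_num]; ring
  have hN0 : 4 ^ α * (4 * n + 3) ≠ 0 := by positivity
  rw [hN]
  calc overpartitionTuples t (4 ^ α * (4 * n + 3))
      ≡ t * overpartitionCount (4 ^ α * (4 * n + 3)) [MOD 4] := overpartitionTuples_modEq t hN0
    _ ≡ 0 [MOD 4] := Nat.modEq_zero_iff_dvd.2 <| Dvd.dvd.mul_left
        (four_dvd_overpartitionCount hN0 (Nat.not_isSquare_four_pow_mul_four_mul_add_three α n)) t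
end

section
/- For all nonnegative integers t and all n ≥ 0, the number of overpartition t-tuples satisfies p̄_t(4n+3) ≡ 0 (mod 8). -/
/-! Modulo 8 an overpartition of `n` with `k` distinct part sizes counts `2^k`, so only
partitions with at most two distinct part sizes matter: `p̄(n) ≡ [n = 0] + 2 (σ₀(n) + 2 A(n))`,
where `A(n)` counts partitions of `n` with exactly two distinct part sizes. Writing the generating
function as `1 + 2a`, its `t`-th power is `1 + 2t a + 4 binom(t, 2) a²` modulo 8, so for `n ≠ 0`
`p̄_t(n) ≡ 2t (σ₀(n) + 2A(n)) + 4 binom(t, 2) ∑_{i+j=n} σ₀(i) σ₀(j) (mod 8)`.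
Counting the solutions of `a k + b l = n` according to the sign of `a - b` gives
`∑_{i+j=n} σ₀(i) σ₀(j) + σ₀(n) = 2 A(n) + σ₁(n)`. For `n ≡ 3 (mod 4)` the involutions
`(i, j) ↦ (j, i)` and `d ↦ n / d` have no fixed points, and squares are `0, 1 (mod 4)`; hence
`σ₀(n)` is even while `σ₁(n)` and `∑_{i+j=n} σ₀(i) σ₀(j)` are divisible by 4, so both terms vanish
modulo 8. -/

open Finset PowerSeries
open scoped ArithmeticFunction.sigma

theorem Finset.Nat.sum_antidiagonalTuple_succ {M : Type*} [AddCommMonoid M] (k n : ℕ)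
    (g : (Fin (k + 1) → ℕ) → M) :
    ∑ c ∈ Nat.antidiagonalTuple (k + 1) n, g c =
      ∑ p ∈ antidiagonal n, ∑ c ∈ Nat.antidiagonalTuple k p.2, g (Fin.cons p.1 c) := by
  simp only [Finset.sum_eq_multiset_sum]
  show (Multiset.map g (List.Nat.antidiagonalTuple (k + 1) n : Multiset _)).sum =
    (Multiset.map (fun p : ℕ × ℕ ↦ (Multiset.map (fun c ↦ g (Fin.cons p.1 c))
      (List.Nat.antidiagonalTuple k p.2 : Multiset _)).sum)
      (List.Nat.antidiagonal n : Multiset _)).sum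
  simp [List.Nat.antidiagonalTuple, List.flatMap, List.sum_flatten, Function.comp_def]

theorem PowerSeries.coeff_mk_pow {R : Type*} [CommSemiring R] (f : ℕ → R) (t n : ℕ) :
    coeff n (mk f ^ t) = ∑ c ∈ Nat.antidiagonalTuple t n, ∏ i, f (c i) := by
  induction t generalizing n with
  | zero => cases n <;> simp [coeff_one]
  | succ t ih =>
    simp [pow_succ', coeff_mul, Nat.sum_antidiagonalTuple_succ, ih, mul_sum, Fin.prod_univ_succ]

theorem PowerSeries.coeff_natCast_mul {R : Type*} [Semiring R] (k n : ℕ) (f : R⟦X⟧) :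
    coeff n ((k : R⟦X⟧) * f) = k * coeff n f := by
  rw [← map_natCast C, coeff_C_mul]

theorem PowerSeries.coeff_ofNat_mul {R : Type*} [Semiring R] (k n : ℕ) [k.AtLeastTwo]
    (f : R⟦X⟧) : coeff n ((ofNat(k) : R⟦X⟧) * f) = ofNat(k) * coeff n f := by
  rw [← map_ofNat C, coeff_C_mul]

theorem one_add_two_mul_pow {R : Type*} [CommRing R] (h8 : (8 : R) = 0) (a : R) (t : ℕ) :
    (1 + 2 * a) ^ t = 1 + 2 * t * a + 4 * t.choose 2 * a ^ 2 := by
  induction t with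
  | zero => simp
  | succ t ih =>
    rw [pow_succ, ih, Nat.choose_succ_succ, Nat.choose_one_right]
    push_cast
    linear_combination (t.choose 2 * a ^ 3 : R) * h8

theorem two_pow_zmod_eight (k : ℕ) :
    (2 : ZMod 8) ^ k = (if k = 0 then 1 else 0) + 2 * (if k = 1 then 1 else 0) +
      4 * (if k = 2 then 1 else 0) := by
  match k with
  | 0 | 1 | 2 => decide
  | k + 3 => simp [pow_add, show (2 : ZMod 8) ^ 3 = 0 from rfl]

theorem card_eq_card_filter_lt_add_card_filter_gt_add_card_filter_eq {α β : Type*}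
    [LinearOrder β] (s : Finset α) (f g : α → β) :
    #s = #{x ∈ s | f x < g x} + #{x ∈ s | g x < f x} + #{x ∈ s | f x = g x} := by
  rw [card_filter, card_filter, card_filter, card_eq_sum_ones, ← sum_add_distrib,
    ← sum_add_distrib]
  refine sum_congr rfl fun x _ ↦ ?_
  rcases lt_trichotomy (f x) (g x) with h | h | h
  · simp [h, h.ne, h.not_gt]
  · simp [h]
  · simp [h, h.ne', h.not_gt]

theorem eq_and_eq_of_pair_eq_pair {α : Type*} [LinearOrder α] {a b c d : α} (hab : a < b)
    (hcd : c < d) (h : ({a, b} : Finset α) = {c, d}) : a = c ∧ b = d := by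
  have hset := congrArg ((↑) : Finset α → Set α) h
  rw [coe_pair, coe_pair] at hset
  rcases Set.pair_eq_pair_iff.1 hset with h' | ⟨rfl, rfl⟩
  · exact h'
  · exact (lt_asymm hab hcd).elim

theorem sum_eq_zero_of_add_swap_eq_zero {α M : Type*} [AddCommMonoid M] {s : Finset (α × α)}
    (f : α × α → M) (hs : ∀ x ∈ s, x.swap ∈ s) (hdiag : ∀ x ∈ s, x.1 ≠ x.2)
    (hf : ∀ x ∈ s, f x + f x.swap = 0) : ∑ x ∈ s, f x = 0 :=
  sum_involution (fun x _ ↦ x.swap) hf (fun x hx _ h ↦ hdiag x hx (congrArg Prod.fst h).symm) hs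
    fun x _ ↦ x.swap_swap

theorem Multiset.eq_replicate_count_add_replicate_count {α : Type*} [DecidableEq α]
    {s : Multiset α} {a b : α} (hab : a ≠ b) (h : s.toFinset = {a, b}) :
    s = replicate (s.count a) a + replicate (s.count b) b := by
  conv_lhs => rw [← toFinset_sum_count_nsmul_eq s, h, Finset.sum_pair hab]
  simp only [nsmul_singleton]

theorem Multiset.toFinset_replicate_add_replicate {α : Type*} [DecidableEq α] {a b : α}
    {k l : ℕ} (hk : k ≠ 0) (hl : l ≠ 0) : (replicate k a + replicate l b).toFinset = {a, b} := by
  rw [toFinset_add, toFinset_replicate, toFinset_replicate, if_neg hk, if_neg hl,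
    Finset.insert_eq]

theorem Multiset.exists_eq_replicate_add_replicate {α : Type*} [LinearOrder α] {s : Multiset α}
    (h : #s.toFinset = 2) :
    ∃ a b k l, a < b ∧ k ≠ 0 ∧ l ≠ 0 ∧ s = replicate k a + replicate l b := by
  obtain ⟨a, b, hab, hset⟩ : ∃ a b, a < b ∧ s.toFinset = {a, b} := by
    obtain ⟨c, d, hcd, hset⟩ := Finset.card_eq_two.1 h
    rcases hcd.lt_or_gt with hlt | hlt
    exacts [⟨c, d, hlt, hset⟩, ⟨d, c, hlt, by rw [hset, Finset.pair_comm]⟩]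
  have ha : a ∈ s := mem_toFinset.1 (by simp [hset])
  have hb : b ∈ s := mem_toFinset.1 (by simp [hset])
  exact ⟨a, b, s.count a, s.count b, hab, (count_pos.2 ha).ne', (count_pos.2 hb).ne',
    eq_replicate_count_add_replicate_count hab.ne hset⟩

theorem Multiset.replicate_add_replicate_inj {α : Type*} [LinearOrder α] {a b a' b' : α}
    {k l k' l' : ℕ} (hab : a < b) (hab' : a' < b') (hk : k ≠ 0) (hl : l ≠ 0) (hk' : k' ≠ 0)
    (hl' : l' ≠ 0) :
    replicate k a + replicate l b = replicate k' a' + replicate l' b' ↔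
      a = a' ∧ b = b' ∧ k = k' ∧ l = l' := by
  refine ⟨fun h ↦ ?_, by rintro ⟨rfl, rfl, rfl, rfl⟩; rfl⟩
  obtain ⟨rfl, rfl⟩ := eq_and_eq_of_pair_eq_pair hab hab' (by
    rw [← toFinset_replicate_add_replicate hk hl, h, toFinset_replicate_add_replicate hk' hl'])
  have hka := congrArg (count a) h
  have hlb := congrArg (count b) h
  simp only [count_add, count_replicate_self, count_replicate, hab.ne, hab.ne', if_false,
    add_zero, zero_add] at hka hlb
  exact ⟨rfl, rfl, hka, hlb⟩

namespace ArithmeticFunction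

theorem sigma_zero_eq_card_divisorsAntidiagonal (n : ℕ) :
    σ 0 n = #n.divisorsAntidiagonal := by
  rw [sigma_zero_apply, ← Nat.map_div_right_divisors, card_map]

theorem sigma_one_eq_sum_divisorsAntidiagonal (n : ℕ) :
    σ 1 n = ∑ x ∈ n.divisorsAntidiagonal, x.2 := by
  rw [sigma_one_apply, Nat.sum_divisorsAntidiagonal' fun _ d ↦ d]

end ArithmeticFunction

open ArithmeticFunction

theorem not_isSquare_of_natCast_eq_three {n : ℕ} (hn : (n : ZMod 4) = 3) : ¬IsSquare n := by
  rintro ⟨r, rfl⟩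
  push_cast at hn
  generalize (r : ZMod 4) = x at hn
  revert x
  decide

theorem not_isSquare_or_not_isSquare_of_natCast_add_eq_three {i j : ℕ}
    (h : (i + j : ZMod 4) = 3) : ¬IsSquare i ∨ ¬IsSquare j := by
  rw [← not_and_or]
  rintro ⟨⟨r, rfl⟩, ⟨s, rfl⟩⟩
  push_cast at h
  generalize (r : ZMod 4) = x, (s : ZMod 4) = y at h
  revert x y
  decide

theorem fst_ne_snd_of_mem_divisorsAntidiagonal {n : ℕ} (hn : ¬IsSquare n) {x : ℕ × ℕ}
    (hx : x ∈ n.divisorsAntidiagonal) : x.1 ≠ x.2 := by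
  intro h
  exact hn ⟨x.1, by rw [← (Nat.mem_divisorsAntidiagonal.1 hx).1, h]⟩

theorem even_sigma_zero_of_not_isSquare {n : ℕ} (hn : ¬IsSquare n) : Even (σ 0 n) := by
  rw [← ZMod.natCast_eq_zero_iff_even, sigma_zero_eq_card_divisorsAntidiagonal, card_eq_sum_ones,
    Nat.cast_sum]
  exact sum_eq_zero_of_add_swap_eq_zero _ (fun _ ↦ Nat.swap_mem_divisorsAntidiagonal.2)
    (fun _ ↦ fst_ne_snd_of_mem_divisorsAntidiagonal hn) fun _ _ ↦ by decide

theorem four_dvd_sigma_one {n : ℕ} (hn : (n : ZMod 4) = 3) : 4 ∣ σ 1 n := by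
  rw [← ZMod.natCast_eq_zero_iff, sigma_one_eq_sum_divisorsAntidiagonal, Nat.cast_sum]
  refine sum_eq_zero_of_add_swap_eq_zero _ (fun _ ↦ Nat.swap_mem_divisorsAntidiagonal.2)
    (fun _ ↦ fst_ne_snd_of_mem_divisorsAntidiagonal (not_isSquare_of_natCast_eq_three hn)) ?_
  rintro ⟨a, b⟩ hx
  have hab : (a * b : ZMod 4) = 3 := by
    rw [← Nat.cast_mul, (Nat.mem_divisorsAntidiagonal.1 hx).1, hn]
  simp only [Prod.swap_prod_mk]
  generalize (a : ZMod 4) = x, (b : ZMod 4) = y at hab ⊢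
  revert x y
  decide

def partitionsWithDistinctParts (n k : ℕ) : Finset n.Partition :=
  {p | #p.parts.toFinset = k}

theorem card_partitionsWithDistinctParts_one (n : ℕ) :
    #(partitionsWithDistinctParts n 1) = σ 0 n := by
  rw [sigma_zero_eq_card_divisorsAntidiagonal]
  symm
  refine card_bij (fun x hx ↦ ⟨Multiset.replicate x.2 x.1, fun hi ↦ ?_, ?_⟩) ?_ ?_ ?_
  · rw [Multiset.eq_of_mem_replicate hi]
    exact Nat.pos_of_mem_divisors (Nat.fst_mem_divisors_of_mem_antidiagonal hx)
  · rw [Multiset.sum_replicate, smul_eq_mul, mul_comm]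
    exact (Nat.mem_divisorsAntidiagonal.1 hx).1
  · intro x hx
    have hk := Nat.pos_of_mem_divisors (Nat.snd_mem_divisors_of_mem_antidiagonal hx)
    simp [partitionsWithDistinctParts, Multiset.toFinset_replicate, hk.ne']
  · intro x hx y hy hxy
    have hparts := congrArg Nat.Partition.parts hxy
    have hk := Nat.pos_of_mem_divisors (Nat.snd_mem_divisors_of_mem_antidiagonal hx)
    simp only at hparts
    have hcard := congrArg Multiset.card hparts
    simp only [Multiset.card_replicate] at hcard
    rw [hcard, Multiset.replicate_right_inj (hcard ▸ hk.ne')] at hparts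
    exact Prod.ext hparts hcard
  · intro p hp
    simp only [partitionsWithDistinctParts, mem_filter, mem_univ, true_and,
      Multiset.toFinset_card_eq_one_iff, Multiset.nsmul_singleton] at hp
    obtain ⟨hk, a, ha⟩ := hp
    have ha0 : 0 < a := p.parts_pos (ha ▸ Multiset.mem_replicate.2 ⟨hk, rfl⟩)
    have hn : a * Multiset.card p.parts = n := by
      have hsum := p.parts_sum
      rwa [ha, Multiset.sum_replicate, smul_eq_mul, mul_comm] at hsum
    refine ⟨(a, Multiset.card p.parts), Nat.mem_divisorsAntidiagonal.2 ⟨hn, ?_⟩,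
      Nat.Partition.ext ha.symm⟩
    rw [← hn]
    positivity

theorem card_partitionsWithDistinctParts_zero (n : ℕ) :
    #(partitionsWithDistinctParts n 0) = if n = 0 then 1 else 0 := by
  rcases eq_or_ne n 0 with rfl | hn
  · simp [partitionsWithDistinctParts]
  · rw [if_neg hn, card_eq_zero, partitionsWithDistinctParts, filter_eq_empty_iff]
    intro p _ hp
    rw [card_eq_zero, Multiset.toFinset_eq_empty] at hp
    have hsum := p.parts_sum
    rw [hp, Multiset.sum_zero] at hsum
    exact hn hsum.symm

theorem overpartitionCount_cast_zmod_eight (n : ℕ) :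
    (overpartitionCount n : ZMod 8) = (if n = 0 then 1 else 0) +
      2 * (σ 0 n + 2 * #(partitionsWithDistinctParts n 2) : ℕ) := by
  have hsplit : (overpartitionCount n : ZMod 8) = #(partitionsWithDistinctParts n 0) +
      2 * #(partitionsWithDistinctParts n 1) + 4 * #(partitionsWithDistinctParts n 2) := by
    simp only [overpartitionCount, Nat.cast_sum, Nat.cast_pow, Nat.cast_ofNat, two_pow_zmod_eight,
      sum_add_distrib, ← mul_sum, partitionsWithDistinctParts, natCast_card_filter]
  rw [hsplit, card_partitionsWithDistinctParts_zero, card_partitionsWithDistinctParts_one]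
  push_cast
  ring

theorem overpartitionTuples_cast_zmod_eight (t n : ℕ) :
    (overpartitionTuples t n : ZMod 8) = (if n = 0 then 1 else 0) +
      2 * t * (σ 0 n + 2 * #(partitionsWithDistinctParts n 2) : ℕ) +
      4 * t.choose 2 * (∑ ij ∈ antidiagonal n, σ 0 ij.1 * σ 0 ij.2 : ℕ) := by
  let a : (ZMod 8)⟦X⟧ := mk fun m ↦ (σ 0 m + 2 * #(partitionsWithDistinctParts m 2) : ℕ)
  have hseries : mk (fun m ↦ (overpartitionCount m : ZMod 8)) = 1 + 2 * a := by
    ext m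
    simp [a, overpartitionCount_cast_zmod_eight, coeff_one, coeff_ofNat_mul]
  have h8 : (8 : ZMod 8) = 0 := rfl
  have hsq : (4 : ZMod 8) * coeff n (a ^ 2) =
      4 * (∑ ij ∈ antidiagonal n, σ 0 ij.1 * σ 0 ij.2 : ℕ) := by
    simp only [a, pow_two, coeff_mul, coeff_mk, mul_sum, Nat.cast_sum]
    refine sum_congr rfl fun ij _ ↦ ?_
    push_cast
    set u : ZMod 8 := ((#(partitionsWithDistinctParts ij.1 2) : ℕ) : ZMod 8)
    set v : ZMod 8 := ((#(partitionsWithDistinctParts ij.2 2) : ℕ) : ZMod 8)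
    linear_combination ((σ 0 ij.1 : ZMod 8) * v + u * σ 0 ij.2 + 2 * u * v) * h8
  have hcoeff := coeff_mk_pow (fun m ↦ (overpartitionCount m : ZMod 8)) t n
  rw [hseries, one_add_two_mul_pow (by simp [← map_ofNat C 8, h8])] at hcoeff
  simp only [map_add, coeff_one, mul_assoc, coeff_ofNat_mul, coeff_natCast_mul] at hcoeff
  rw [overpartitionTuples, Nat.cast_sum]
  simp only [Nat.cast_prod, ← hcoeff, a, coeff_mk]
  linear_combination (t.choose 2 : ZMod 8) * hsq

/-- The solutions `((a, k), (b, l))` of `a * k + b * l = n` in positive integers, each tagged with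
`(a * k, b * l)`. Those with `a < b` encode the partitions `a^k b^l` of `n`. -/
def divisorQuadruples (n : ℕ) : Finset (Σ _ : ℕ × ℕ, (ℕ × ℕ) × (ℕ × ℕ)) :=
  (antidiagonal n).sigma fun ij ↦ ij.1.divisorsAntidiagonal ×ˢ ij.2.divisorsAntidiagonal

@[simp]
theorem mem_divisorQuadruples {n i j a k b l : ℕ} :
    ⟨(i, j), (a, k), (b, l)⟩ ∈ divisorQuadruples n ↔
      i + j = n ∧ (a * k = i ∧ i ≠ 0) ∧ (b * l = j ∧ j ≠ 0) := by
  simp [divisorQuadruples]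

theorem card_divisorQuadruples (n : ℕ) :
    #(divisorQuadruples n) = ∑ ij ∈ antidiagonal n, σ 0 ij.1 * σ 0 ij.2 := by
  simp [divisorQuadruples, card_sigma, sigma_zero_eq_card_divisorsAntidiagonal]

theorem card_divisorQuadruples_filter_gt (n : ℕ) :
    #{x ∈ divisorQuadruples n | x.2.2.1 < x.2.1.1} =
      #{x ∈ divisorQuadruples n | x.2.1.1 < x.2.2.1} := by
  let swap : (Σ _ : ℕ × ℕ, (ℕ × ℕ) × (ℕ × ℕ)) → Σ _ : ℕ × ℕ, (ℕ × ℕ) × (ℕ × ℕ) :=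
    fun x ↦ ⟨x.1.swap, x.2.swap⟩
  refine card_nbij' swap swap ?_ ?_ (fun _ _ ↦ rfl) (fun _ _ ↦ rfl) <;>
  · rintro ⟨⟨i, j⟩, ⟨a, k⟩, ⟨b, l⟩⟩
    simp only [swap, mem_coe, mem_filter, mem_divisorQuadruples, Prod.swap_prod_mk]
    omega

theorem card_divisorQuadruples_filter_eq (n : ℕ) :
    #{x ∈ divisorQuadruples n | x.2.1.1 = x.2.2.1} =
      #(n.divisorsAntidiagonal.sigma fun am ↦ Ioo 0 am.2) := by
  refine card_nbij' (fun x ↦ ⟨(x.2.1.1, x.2.1.2 + x.2.2.2), x.2.1.2⟩)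
    (fun y ↦ ⟨(y.1.1 * y.2, y.1.1 * (y.1.2 - y.2)), (y.1.1, y.2), (y.1.1, y.1.2 - y.2)⟩)
    ?_ ?_ ?_ ?_
  · rintro ⟨⟨i, j⟩, ⟨a, k⟩, ⟨b, l⟩⟩
    simp only [mem_coe, mem_filter, mem_divisorQuadruples, mem_sigma,
      Nat.mem_divisorsAntidiagonal, mem_Ioo]
    rintro ⟨⟨rfl, ⟨rfl, hk⟩, ⟨rfl, hl⟩⟩, rfl⟩
    refine ⟨⟨by ring, by positivity⟩, Nat.pos_of_ne_zero (right_ne_zero_of_mul hk), ?_⟩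
    have := Nat.pos_of_ne_zero (right_ne_zero_of_mul hl)
    omega
  · rintro ⟨⟨a, m⟩, k⟩
    simp only [mem_coe, mem_filter, mem_divisorQuadruples, mem_sigma,
      Nat.mem_divisorsAntidiagonal, mem_Ioo, true_and, and_true]
    rintro ⟨⟨rfl, hn⟩, hk, hkm⟩
    have ha : a ≠ 0 := left_ne_zero_of_mul hn
    have hmk : m - k ≠ 0 := Nat.sub_ne_zero_of_lt hkm
    exact ⟨by rw [← mul_add, Nat.add_sub_cancel' hkm.le], by positivity, by positivity⟩
  · rintro ⟨⟨i, j⟩, ⟨a, k⟩, ⟨b, l⟩⟩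
    simp only [mem_coe, mem_filter, mem_divisorQuadruples]
    rintro ⟨⟨rfl, ⟨rfl, -⟩, ⟨rfl, -⟩⟩, rfl⟩
    simp
  · rintro ⟨⟨a, m⟩, k⟩
    simp only [mem_coe, mem_sigma, mem_Ioo]
    rintro ⟨-, -, hkm⟩
    simp [Nat.add_sub_cancel' hkm.le]

theorem card_divisorQuadruples_filter_eq_add_sigma_zero (n : ℕ) :
    #{x ∈ divisorQuadruples n | x.2.1.1 = x.2.2.1} + σ 0 n = σ 1 n := by
  rw [card_divisorQuadruples_filter_eq, card_sigma, sigma_zero_eq_card_divisorsAntidiagonal,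
    sigma_one_eq_sum_divisorsAntidiagonal, card_eq_sum_ones, ← sum_add_distrib]
  refine sum_congr rfl fun am ham ↦ ?_
  have := Nat.pos_of_mem_divisors (Nat.snd_mem_divisors_of_mem_antidiagonal ham)
  rw [Nat.card_Ioo]
  omega

theorem card_divisorQuadruples_filter_lt (n : ℕ) :
    #{x ∈ divisorQuadruples n | x.2.1.1 < x.2.2.1} = #(partitionsWithDistinctParts n 2) := by
  refine card_bij (fun x hx ↦ ⟨Multiset.replicate x.2.1.2 x.2.1.1 +
    Multiset.replicate x.2.2.2 x.2.2.1, fun hi ↦ ?_, ?_⟩) ?_ ?_ ?_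
  · obtain ⟨⟨i, j⟩, ⟨a, k⟩, ⟨b, l⟩⟩ := x
    simp only [mem_filter, mem_divisorQuadruples] at hx
    obtain ⟨⟨-, ⟨rfl, hk⟩, ⟨rfl, hl⟩⟩, -⟩ := hx
    have ha : 0 < a := Nat.pos_of_ne_zero (left_ne_zero_of_mul hk)
    have hb : 0 < b := Nat.pos_of_ne_zero (left_ne_zero_of_mul hl)
    rcases Multiset.mem_add.1 hi with hi | hi <;> rw [Multiset.eq_of_mem_replicate hi] <;>
      assumption
  · obtain ⟨⟨i, j⟩, ⟨a, k⟩, ⟨b, l⟩⟩ := x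
    simp only [mem_filter, mem_divisorQuadruples] at hx
    obtain ⟨⟨rfl, ⟨rfl, -⟩, ⟨rfl, -⟩⟩, -⟩ := hx
    simp [Multiset.sum_replicate, mul_comm]
  · rintro ⟨⟨i, j⟩, ⟨a, k⟩, ⟨b, l⟩⟩ hx
    simp only [mem_filter, mem_divisorQuadruples] at hx
    obtain ⟨⟨-, ⟨rfl, hk⟩, ⟨rfl, hl⟩⟩, hab⟩ := hx
    simp only [partitionsWithDistinctParts, mem_filter, mem_univ, true_and]
    rw [Multiset.toFinset_replicate_add_replicate (right_ne_zero_of_mul hk)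
      (right_ne_zero_of_mul hl), card_pair hab.ne]
  · rintro ⟨⟨i, j⟩, ⟨a, k⟩, ⟨b, l⟩⟩ hx ⟨⟨i', j'⟩, ⟨a', k'⟩, ⟨b', l'⟩⟩ hy hxy
    simp only [mem_filter, mem_divisorQuadruples] at hx hy
    obtain ⟨⟨-, ⟨rfl, hk⟩, ⟨rfl, hl⟩⟩, hab⟩ := hx
    obtain ⟨⟨-, ⟨rfl, hk'⟩, ⟨rfl, hl'⟩⟩, hab'⟩ := hy
    obtain ⟨rfl, rfl, rfl, rfl⟩ := (Multiset.replicate_add_replicate_inj hab hab'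
      (right_ne_zero_of_mul hk) (right_ne_zero_of_mul hl) (right_ne_zero_of_mul hk')
      (right_ne_zero_of_mul hl')).1 (congrArg Nat.Partition.parts hxy)
    rfl
  · intro p hp
    simp only [partitionsWithDistinctParts, mem_filter, mem_univ, true_and] at hp
    obtain ⟨a, b, k, l, hab, hk, hl, hparts⟩ := Multiset.exists_eq_replicate_add_replicate hp
    have ha : 0 < a := p.parts_pos <| hparts ▸ Multiset.mem_add.2 <|
      .inl (Multiset.mem_replicate.2 ⟨hk, rfl⟩)
    have hb : 0 < b := p.parts_pos <| hparts ▸ Multiset.mem_add.2 <|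
      .inr (Multiset.mem_replicate.2 ⟨hl, rfl⟩)
    have hsum : a * k + b * l = n := by
      have hsum := p.parts_sum
      rwa [hparts, Multiset.sum_add, Multiset.sum_replicate, Multiset.sum_replicate, smul_eq_mul,
        smul_eq_mul, mul_comm k, mul_comm l] at hsum
    refine ⟨⟨(a * k, b * l), (a, k), (b, l)⟩, ?_, Nat.Partition.ext hparts.symm⟩
    simp only [mem_filter, mem_divisorQuadruples, true_and]
    exact ⟨⟨hsum, by positivity, by positivity⟩, hab⟩

theorem sum_sigma_zero_mul_sigma_zero_add_sigma_zero (n : ℕ) :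
    ∑ ij ∈ antidiagonal n, σ 0 ij.1 * σ 0 ij.2 + σ 0 n =
      2 * #(partitionsWithDistinctParts n 2) + σ 1 n := by
  rw [← card_divisorQuadruples, card_eq_card_filter_lt_add_card_filter_gt_add_card_filter_eq _
    (fun x ↦ x.2.1.1) (fun x ↦ x.2.2.1), card_divisorQuadruples_filter_gt, add_assoc,
    card_divisorQuadruples_filter_eq_add_sigma_zero, card_divisorQuadruples_filter_lt]
  ring

theorem four_dvd_sum_antidiagonal_sigma_zero_mul {n : ℕ} (hn : (n : ZMod 4) = 3) :
    4 ∣ ∑ ij ∈ antidiagonal n, σ 0 ij.1 * σ 0 ij.2 := by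
  rw [← ZMod.natCast_eq_zero_iff, Nat.cast_sum]
  refine sum_eq_zero_of_add_swap_eq_zero _ (fun x hx ↦ ?_) (fun x hx h ↦ ?_) ?_
  · rw [HasAntidiagonal.mem_antidiagonal] at hx ⊢
    rw [Prod.fst_swap, Prod.snd_swap, add_comm, hx]
  · rw [HasAntidiagonal.mem_antidiagonal, h] at hx
    rw [← hx] at hn
    push_cast at hn
    generalize (x.2 : ZMod 4) = y at hn
    revert y
    decide
  · rintro ⟨i, j⟩ hij
    rw [HasAntidiagonal.mem_antidiagonal] at hij
    have h4 : (4 : ZMod 4) = 0 := rfl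
    simp only [Prod.swap_prod_mk, Nat.cast_mul]
    rcases not_isSquare_or_not_isSquare_of_natCast_add_eq_three (by rw [← Nat.cast_add, hij, hn])
      with hi | hj
    · obtain ⟨r, hr⟩ := even_sigma_zero_of_not_isSquare hi
      rw [hr]
      push_cast
      linear_combination (r * σ 0 j : ZMod 4) * h4
    · obtain ⟨r, hr⟩ := even_sigma_zero_of_not_isSquare hj
      rw [hr]
      push_cast
      linear_combination (r * σ 0 i : ZMod 4) * h4

theorem four_dvd_sigma_zero_add_two_mul_card_partitionsWithDistinctParts {n : ℕ}
    (hn : (n : ZMod 4) = 3) :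
    4 ∣ σ 0 n + 2 * #(partitionsWithDistinctParts n 2) := by
  have hid := sum_sigma_zero_mul_sigma_zero_add_sigma_zero n
  obtain ⟨r, hr⟩ := even_sigma_zero_of_not_isSquare (not_isSquare_of_natCast_eq_three hn)
  obtain ⟨s, hs⟩ := four_dvd_sigma_one hn
  obtain ⟨u, hu⟩ := four_dvd_sum_antidiagonal_sigma_zero_mul hn
  omega

theorem overpartitionTuples_four_n_three_mod_eight (t n : ℕ) :
    overpartitionTuples t (4 * n + 3) ≡ 0 [MOD 8] := by
  have hN : ((4 * n + 3 : ℕ) : ZMod 4) = 3 := by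
    push_cast
    rw [show (4 : ZMod 4) = 0 from rfl, zero_mul, zero_add]
  obtain ⟨u, hu⟩ := four_dvd_sigma_zero_add_two_mul_card_partitionsWithDistinctParts hN
  obtain ⟨v, hv⟩ := four_dvd_sum_antidiagonal_sigma_zero_mul hN
  rw [Nat.modEq_zero_iff_dvd, ← ZMod.natCast_eq_zero_iff, overpartitionTuples_cast_zmod_eight,
    if_neg (by omega), hu, hv]
  have h8 : (8 : ZMod 8) = 0 := rfl
  push_cast
  linear_combination (t * u + 2 * t.choose 2 * v : ZMod 8) * h8
end

section
/- For all nonnegative integers t and all n ≥ 0, the number of overpartition t-tuples satisfies p̄_t(8n+7) ≡ 0 (mod 32). -/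
open Finset PowerSeries

lemma Nat.cast_dist_sq (a b : ℕ) : ((Nat.dist a b : ℕ) : ℤ) ^ 2 = ((a : ℤ) - b) ^ 2 := by
  rcases le_total a b with h | h
  · rw [Nat.dist_eq_sub_of_le h]; push_cast [h]; ring
  · rw [Nat.dist_eq_sub_of_le_right h]; push_cast [h]; ring

lemma Nat.sq_mod_eight (k : ℕ) : k ^ 2 % 8 = 0 ∨ k ^ 2 % 8 = 1 ∨ k ^ 2 % 8 = 4 := by
  have h := Nat.mod_lt k (show 8 > 0 by norm_num)
  rw [Nat.pow_mod]
  interval_cases k % 8 <;> simp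

lemma PowerSeries.coeff_prod_fin {R : Type*} [CommSemiring R] {t : ℕ} (f : Fin t → R⟦X⟧)
    (n : ℕ) : coeff n (∏ i, f i) = ∑ c ∈ Nat.antidiagonalTuple t n, ∏ i, coeff (c i) (f i) := by
  classical
  rw [coeff_prod, ← piAntidiag_univ_fin_eq_antidiagonalTuple, finsuppAntidiag, sum_map,
    ← sum_attach (piAntidiag univ n)]
  rfl

section

variable {R : Type*} [CommRing R]

section QBinomial

variable (q : R)

def qBinomial : ℕ → ℕ → R
  | _, 0 => 1
  | 0, _ + 1 => 0
  | m + 1, r + 1 => qBinomial m r + q ^ (r + 1) * qBinomial m (r + 1)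

@[simp]
lemma qBinomial_zero_right (m : ℕ) : qBinomial q m 0 = 1 := by
  cases m <;> rfl

lemma qBinomial_succ_succ (m r : ℕ) :
    qBinomial q (m + 1) (r + 1) = qBinomial q m r + q ^ (r + 1) * qBinomial q m (r + 1) :=
  rfl

lemma qBinomial_eq_zero_of_lt {m r : ℕ} (h : m < r) : qBinomial q m r = 0 := by
  induction m generalizing r with
  | zero => obtain ⟨r, rfl⟩ := Nat.exists_eq_add_one_of_ne_zero h.ne'; rfl
  | succ m ih =>
    obtain ⟨r, rfl⟩ := Nat.exists_eq_add_one_of_ne_zero (by omega : r ≠ 0)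
    rw [qBinomial_succ_succ, ih (by omega), ih (by omega), mul_zero, add_zero]

lemma one_sub_pow_mul_qBinomial_succ (m r : ℕ) :
    (1 - q ^ (r + 1)) * qBinomial q m (r + 1) = (1 - q ^ (m - r)) * qBinomial q m r := by
  induction m generalizing r with
  | zero => cases r <;> simp [qBinomial]
  | succ m ih =>
    cases r with
    | zero =>
      have h := ih 0
      simp only [qBinomial_zero_right, mul_one, Nat.sub_zero] at h ⊢
      rw [qBinomial_succ_succ, qBinomial_zero_right]
      linear_combination q * h
    | succ r =>
      rcases lt_or_ge m (r + 1) with hmr | hrm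
      · rw [qBinomial_eq_zero_of_lt q (by omega : m + 1 < r + 2)]
        obtain rfl | hlt := eq_or_lt_of_le (Nat.lt_succ_iff.mp hmr)
        · simp
        · rw [qBinomial_eq_zero_of_lt q (by omega : m + 1 < r + 1), mul_zero, mul_zero]
      · have hq : q ^ (r + 2) * q ^ (m - (r + 1)) = q ^ (m + 1) := by
          rw [← pow_add]; congr 1; omega
        have hq' : q ^ (m - r) * q ^ (r + 1) = q ^ (m + 1) := by
          rw [← pow_add]; congr 1; omega
        rw [Nat.add_sub_add_right, qBinomial_succ_succ, qBinomial_succ_succ]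
        linear_combination ih r + q ^ (r + 2) * ih (r + 1) + qBinomial q m (r + 1) * (hq' - hq)

lemma qBinomial_succ_succ' (m r : ℕ) :
    qBinomial q (m + 1) (r + 1) = q ^ (m - r) * qBinomial q m r + qBinomial q m (r + 1) := by
  linear_combination qBinomial_succ_succ q m r - one_sub_pow_mul_qBinomial_succ q m r

lemma qBinomial_add_two_add_two (m r : ℕ) :
    qBinomial q (m + 2) (r + 2) = q ^ (2 * (m - r)) * qBinomial q m r
      + (1 + q ^ (m - r)) * qBinomial q m (r + 1) + q ^ (r + 2) * qBinomial q m (r + 2) := by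
  rw [qBinomial_succ_succ' q (m + 1) (r + 1), Nat.add_sub_add_right, qBinomial_succ_succ',
    qBinomial_succ_succ q m (r + 1)]
  ring

lemma qBinomial_add_two_one (m : ℕ) :
    qBinomial q (m + 2) 1 = 1 + q * qBinomial q m 1 + q ^ (m + 1) := by
  rw [qBinomial_succ_succ' q (m + 1) 0, qBinomial_succ_succ q m 0]
  simp only [qBinomial_zero_right, Nat.sub_zero, zero_add, pow_one]
  ring

def qPochhammer (n : ℕ) : R := ∏ i ∈ range n, (1 - q ^ (i + 1))

lemma qPochhammer_succ (n : ℕ) : qPochhammer q (n + 1) = qPochhammer q n * (1 - q ^ (n + 1)) :=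
  prod_range_succ _ _

lemma qBinomial_mul_qPochhammer_eq_prod (m r : ℕ) :
    qBinomial q m r * qPochhammer q r = ∏ i ∈ range r, (1 - q ^ (m - i)) := by
  induction m generalizing r with
  | zero => cases r <;> simp [qBinomial, qPochhammer, prod_range_succ']
  | succ m ih =>
    cases r with
    | zero => simp [qPochhammer]
    | succ r =>
      have hvanish :
          (∏ i ∈ range r, (1 - q ^ (m - i))) * (q ^ (m + 1) - q ^ (r + 1) * q ^ (m - r)) = 0 := by
        rcases le_or_gt r m with h | h
        · rw [← pow_add, show r + 1 + (m - r) = m + 1 by omega, sub_self, mul_zero]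
        · rw [prod_eq_zero (mem_range.mpr h) (by simp), zero_mul]
      rw [prod_range_succ']
      simp only [Nat.add_sub_add_right, Nat.sub_zero]
      rw [qBinomial_succ_succ, add_mul, qPochhammer_succ, ← mul_assoc, ih, mul_assoc,
        ← qPochhammer_succ, ih, prod_range_succ]
      linear_combination hvanish

lemma qBinomial_mul_qPochhammer {m r : ℕ} (h : r ≤ m) :
    qBinomial q m r * qPochhammer q m
      = (∏ i ∈ range r, (1 - q ^ (m - i))) * ∏ i ∈ Ico r m, (1 - q ^ (i + 1)) := by
  rw [qPochhammer, ← prod_range_mul_prod_Ico _ h, ← mul_assoc]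
  exact congrArg (· * _) (qBinomial_mul_qPochhammer_eq_prod q m r)

lemma qPochhammer_two_mul (n : ℕ) :
    qPochhammer q (2 * n)
      = (∏ j ∈ range n, (1 - q ^ (2 * j + 1))) * ∏ j ∈ range n, (1 - q ^ (2 * (j + 1))) := by
  induction n with
  | zero => simp [qPochhammer]
  | succ n ih =>
    rw [show 2 * (n + 1) = 2 * n + 1 + 1 by ring, qPochhammer_succ, qPochhammer_succ, ih,
      prod_range_succ, prod_range_succ]
    ring

lemma qPochhammer_mul_prod_one_add (M : ℕ) :
    qPochhammer q M * ∏ i ∈ range M, (1 + q ^ (i + 1))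
      = ∏ i ∈ range M, (1 - q ^ (2 * (i + 1))) := by
  rw [qPochhammer, ← prod_mul_distrib]
  exact prod_congr rfl fun i _ ↦ by ring

/-- `(-1)ᵏ q^{k²} [2n, n+k]_q`, indexed by `r = n + k`. -/
def gaussTerm (n r : ℕ) : R := (-1) ^ (n + r) * q ^ (Nat.dist n r ^ 2) * qBinomial q (2 * n) r

/-- Chosen so that expanding `gaussTerm q (n + 1)` by `qBinomial_add_two_add_two` leaves a
telescoping difference (`gaussTerm_succ_add_two`). -/
def gaussRemainder (n s : ℕ) : R :=
  (-1) ^ (n + s) * q ^ (Nat.dist (n + 1) s ^ 2 + s) * qBinomial q (2 * n) s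

lemma gaussTerm_succ_add_two {n j : ℕ} (hj : j ≤ 2 * n) :
    gaussTerm q (n + 1) (j + 2) = -q ^ (2 * n + 1) * gaussTerm q n j + gaussTerm q n (j + 1)
      + (gaussRemainder q n (j + 1) - gaussRemainder q n (j + 2)) := by
  have e1 : Nat.dist n (j + 1) ^ 2 + 2 * (2 * n - j) = 2 * n + 1 + Nat.dist n j ^ 2 := by
    zify [hj]; simp only [Nat.cast_dist_sq]; push_cast; ring
  have e2 : Nat.dist n j ^ 2 + (j + 1) = Nat.dist n (j + 1) ^ 2 + (2 * n - j) := by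
    zify [hj]; simp only [Nat.cast_dist_sq]; push_cast; ring
  have p1 : q ^ (Nat.dist n (j + 1) ^ 2) * q ^ (2 * (2 * n - j))
      = q ^ (2 * n + 1) * q ^ (Nat.dist n j ^ 2) := by rw [← pow_add, ← pow_add, e1]
  have p2 : q ^ (Nat.dist n j ^ 2) * q ^ (j + 1)
      = q ^ (Nat.dist n (j + 1) ^ 2) * q ^ (2 * n - j) := by rw [← pow_add, ← pow_add, e2]
  simp only [gaussTerm, gaussRemainder, show 2 * (n + 1) = 2 * n + 2 by ring,
    qBinomial_add_two_add_two, Nat.dist_succ_succ]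
  linear_combination (-(-1 : R) ^ (n + j) * qBinomial q (2 * n) j) * p1
    + ((-1 : R) ^ (n + j) * qBinomial q (2 * n) (j + 1)) * p2

lemma gaussTerm_succ_zero_add_gaussTerm_succ_one (n : ℕ) :
    gaussTerm q (n + 1) 0 + gaussTerm q (n + 1) 1 = gaussTerm q n 0 - gaussRemainder q n 1 := by
  simp only [gaussTerm, gaussRemainder, show 2 * (n + 1) = 2 * n + 2 by ring,
    qBinomial_add_two_one, qBinomial_zero_right, Nat.dist_zero_right, Nat.dist_succ_succ]
  ring

lemma sum_gaussTerm_succ (n : ℕ) :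
    ∑ r ∈ range (2 * (n + 1) + 1), gaussTerm q (n + 1) r
      = (1 - q ^ (2 * n + 1)) * ∑ r ∈ range (2 * n + 1), gaussTerm q n r := by
  have htop : gaussTerm q n (2 * n + 1) = 0 := by
    rw [gaussTerm, qBinomial_eq_zero_of_lt q (by omega), mul_zero]
  have hshift : ∑ j ∈ range (2 * n + 1), gaussTerm q n (j + 1) + gaussTerm q n 0
      = ∑ r ∈ range (2 * n + 1), gaussTerm q n r := by
    rw [← sum_range_succ', sum_range_succ, htop, add_zero]
  have htel : ∑ j ∈ range (2 * n + 1), (gaussRemainder q n (j + 1) - gaussRemainder q n (j + 2))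
      = gaussRemainder q n 1 := by
    rw [sum_range_sub' (fun i ↦ gaussRemainder q n (i + 1)), sub_eq_self, gaussRemainder,
      qBinomial_eq_zero_of_lt q (by omega), mul_zero]
  rw [show 2 * (n + 1) + 1 = 2 * n + 1 + 1 + 1 by ring, sum_range_succ', sum_range_succ',
    sum_congr rfl fun j hj ↦ gaussTerm_succ_add_two q (Nat.lt_succ_iff.mp (mem_range.mp hj)),
    sum_add_distrib, sum_add_distrib, ← mul_sum, htel]
  linear_combination hshift + gaussTerm_succ_zero_add_gaussTerm_succ_one q n

theorem sum_gaussTerm (n : ℕ) :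
    ∑ r ∈ range (2 * n + 1), gaussTerm q n r = ∏ j ∈ range n, (1 - q ^ (2 * j + 1)) := by
  induction n with
  | zero => simp [gaussTerm]
  | succ n ih => rw [sum_gaussTerm_succ, ih, prod_range_succ, mul_comm]

def altSquareSum (n : ℕ) : R := ∑ k ∈ Icc 1 n, (-1) ^ (k + 1) * q ^ (k ^ 2)

lemma sum_neg_one_pow_mul_pow_dist_sq (n : ℕ) :
    ∑ r ∈ range (2 * n + 1), (-1) ^ (n + r) * q ^ (Nat.dist n r ^ 2)
      = 1 - 2 * altSquareSum q n := by
  induction n with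
  | zero => simp [altSquareSum]
  | succ n ih =>
    have hmid : ∀ j, (-1 : R) ^ (n + 1 + (j + 1)) * q ^ (Nat.dist (n + 1) (j + 1) ^ 2)
        = (-1) ^ (n + j) * q ^ (Nat.dist n j ^ 2) := fun j ↦ by
      rw [Nat.dist_succ_succ, show n + 1 + (j + 1) = n + j + 2 by ring, pow_add, neg_one_sq,
        mul_one]
    have hlast : (-1 : R) ^ (n + 1 + (2 * n + 1 + 1)) = (-1) ^ (n + 1) := by
      rw [show n + 1 + (2 * n + 1 + 1) = n + 1 + 2 * (n + 1) by ring, pow_add, pow_mul,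
        neg_one_sq, one_pow, mul_one]
    rw [show 2 * (n + 1) + 1 = 2 * n + 1 + 1 + 1 by ring, sum_range_succ, sum_range_succ',
      sum_congr rfl fun j _ ↦ hmid j, ih, hlast, Nat.dist_zero_right,
      Nat.dist_eq_sub_of_le (by omega : n + 1 ≤ 2 * n + 1 + 1),
      show 2 * n + 1 + 1 - (n + 1) = n + 1 by omega, altSquareSum, altSquareSum,
      sum_Icc_succ_top (by omega)]
    ring

end QBinomial

noncomputable abbrev modXPow (n : ℕ) : R⟦X⟧ →+* R⟦X⟧ ⧸ Ideal.span {(X : R⟦X⟧) ^ n} :=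
  Ideal.Quotient.mk _

lemma modXPow_eq_iff {n : ℕ} {f g : R⟦X⟧} :
    modXPow n f = modXPow n g ↔ ∀ m < n, coeff m f = coeff m g := by
  simp only [Ideal.Quotient.eq, Ideal.mem_span_singleton, X_pow_dvd_iff, map_sub, sub_eq_zero]

lemma modXPow_eq_of_le {m n : ℕ} (h : m ≤ n) {f g : R⟦X⟧} (hfg : modXPow n f = modXPow n g) :
    modXPow m f = modXPow m g :=
  modXPow_eq_iff.mpr fun k hk ↦ modXPow_eq_iff.mp hfg k (by omega)

lemma modXPow_X_pow {n j : ℕ} (h : n ≤ j) : modXPow n (X ^ j : R⟦X⟧) = 0 :=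
  Ideal.Quotient.eq_zero_iff_mem.mpr (Ideal.mem_span_singleton.mpr (pow_dvd_pow X h))

lemma modXPow_one_sub_X_pow {n j : ℕ} (h : n ≤ j) : modXPow n (1 - X ^ j : R⟦X⟧) = 1 := by
  rw [map_sub, modXPow_X_pow h, map_one, sub_zero]

lemma modXPow_X_pow_mul {e n : ℕ} {f g : R⟦X⟧} (hfg : modXPow n f = modXPow n g) :
    modXPow (e + n) (X ^ e * f) = modXPow (e + n) (X ^ e * g) := by
  rw [modXPow_eq_iff] at hfg ⊢
  intro m hm
  simp only [coeff_X_pow_mul']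
  split_ifs
  · exact hfg _ (by omega)
  · rfl

lemma modXPow_prod_eq_one {ι : Type*} {n : ℕ} {s : Finset ι} {f : ι → R⟦X⟧}
    (hf : ∀ i ∈ s, modXPow n (f i) = 1) : modXPow n (∏ i ∈ s, f i) = 1 := by
  rw [map_prod]
  exact prod_eq_one hf

lemma modXPow_prod_range_of_le {n M M' : ℕ} (h : M ≤ M') {f : ℕ → R⟦X⟧}
    (hf : ∀ i, M ≤ i → modXPow n (f i) = 1) :
    modXPow n (∏ i ∈ range M', f i) = modXPow n (∏ i ∈ range M, f i) := by
  rw [← prod_range_mul_prod_Ico f h, map_mul,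
    modXPow_prod_eq_one fun i hi ↦ hf i (mem_Ico.mp hi).1, mul_one]

open scoped PowerSeries.WithPiTopology in
lemma HasProd.modXPow_prod_range [TopologicalSpace R] [DiscreteTopology R] {f : ℕ → R⟦X⟧}
    {a : R⟦X⟧} (hprod : HasProd f a) {n M : ℕ} (hf : ∀ i, M ≤ i → modXPow n (f i) = 1) :
    modXPow n (∏ i ∈ range M, f i) = modXPow n a := by
  classical
  refine modXPow_eq_iff.mpr fun k hk ↦ ?_
  have hconst := (WithPiTopology.tendsto_iff_coeff_tendsto R _ _ _).mp hprod k
  rw [nhds_discrete, Filter.tendsto_pure, SummationFilter.unconditional_filter,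
    Filter.eventually_atTop] at hconst
  obtain ⟨s, hs⟩ := hconst
  have hsplit : modXPow n (∏ i ∈ s ∪ range M, f i) = modXPow n (∏ i ∈ range M, f i) := by
    rw [← prod_sdiff subset_union_right, map_mul,
      modXPow_prod_eq_one fun i hi ↦ hf i (by simpa using (mem_sdiff.mp hi).2), one_mul]
  rw [← hs _ subset_union_left]
  exact (modXPow_eq_iff.mp hsplit k hk).symm

lemma modXPow_one_sub_two_mul_altSquareSum (n : ℕ) :
    modXPow (n + 1) (1 - 2 * altSquareSum (X : R⟦X⟧) n)
      = modXPow (n + 1) ((∏ j ∈ range n, (1 - X ^ (2 * j + 1))) * qPochhammer X (2 * n)) := by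
  rw [← sum_neg_one_pow_mul_pow_dist_sq, ← sum_gaussTerm, sum_mul, map_sum, map_sum]
  refine sum_congr rfl fun r hr ↦ ?_
  have hr : r ≤ 2 * n := Nat.lt_succ_iff.mp (mem_range.mp hr)
  set d := Nat.dist n r with hd
  have hdr : d ≤ n ∧ n + 1 - d ≤ r + 1 ∧ n + 1 - d ≤ 2 * n + 1 - r := by
    simp only [hd, Nat.dist]; omega
  have hfactor :
      modXPow (n + 1 - d) (qBinomial (X : R⟦X⟧) (2 * n) r * qPochhammer X (2 * n)) = 1 := by
    rw [qBinomial_mul_qPochhammer _ hr, map_mul,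
      modXPow_prod_eq_one fun i hi ↦ modXPow_one_sub_X_pow (by rw [mem_range] at hi; omega),
      modXPow_prod_eq_one fun i hi ↦ modXPow_one_sub_X_pow (by rw [mem_Ico] at hi; omega),
      one_mul]
  have hshift := modXPow_eq_of_le (m := n + 1) (by have := Nat.le_self_pow two_ne_zero d; omega)
    (modXPow_X_pow_mul (e := d ^ 2) (hfactor.trans (map_one _).symm))
  rw [gaussTerm, show ∀ a b c : R⟦X⟧, a * b * c * qPochhammer X (2 * n)
      = a * (b * (c * qPochhammer X (2 * n))) from fun _ _ _ ↦ by ring,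
    map_mul, map_mul, hshift, mul_one]

noncomputable def overpartitionSeries (R : Type*) [CommRing R] : R⟦X⟧ :=
  mk fun n ↦ (overpartitionCount n : R)

lemma genFun_two_eq_overpartitionSeries :
    Nat.Partition.genFun (fun _ _ ↦ (2 : R)) = overpartitionSeries R := by
  ext n
  simp [overpartitionSeries, overpartitionCount, Finsupp.prod, Multiset.toFinsupp_support]

open scoped PowerSeries.WithPiTopology in
lemma one_add_tsum_two_smul_mul_one_sub [TopologicalSpace R] [IsTopologicalRing R] [T2Space R]
    (i : ℕ) : (1 + ∑' j, (2 : R) • X ^ ((i + 1) * (j + 1))) * (1 - X ^ (i + 1))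
      = 1 + (X : R⟦X⟧) ^ (i + 1) := by
  set y : R⟦X⟧ := X ^ (i + 1)
  have hy : constantCoeff y = 0 := by simp [y]
  have hsum : ∑' j, (2 : R) • X ^ ((i + 1) * (j + 1)) = (2 * y) * ∑' j, y ^ j := by
    rw [← (WithPiTopology.summable_pow_of_constantCoeff_eq_zero hy).tsum_mul_left]
    refine tsum_congr fun j ↦ ?_
    rw [two_smul, pow_mul, pow_succ]
    ring
  rw [hsum]
  linear_combination (2 * y) * WithPiTopology.tsum_pow_mul_one_sub_of_constantCoeff_eq_zero hy

open scoped PowerSeries.WithPiTopology in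
lemma modXPow_overpartitionSeries_mul_qPochhammer (M : ℕ) :
    modXPow (M + 1) (overpartitionSeries R * qPochhammer X M)
      = modXPow (M + 1) (∏ i ∈ range M, (1 + X ^ (i + 1))) := by
  -- in the discrete topology, convergence of the product formula for `genFun` is exactness
  -- coefficient by coefficient
  let _ : TopologicalSpace R := ⊥
  have _ : DiscreteTopology R := ⟨rfl⟩
  have hprod := Nat.Partition.hasProd_genFun (fun _ _ ↦ (2 : R))
  rw [genFun_two_eq_overpartitionSeries] at hprod
  have htail : ∀ i, M ≤ i →
      modXPow (M + 1) (1 + ∑' j, (2 : R) • (X : R⟦X⟧) ^ ((i + 1) * (j + 1))) = 1 := by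
    intro i hi
    have h := congrArg (modXPow (M + 1)) (one_add_tsum_two_smul_mul_one_sub (R := R) i)
    rw [map_mul, modXPow_one_sub_X_pow (by omega), mul_one] at h
    rw [h, map_add, modXPow_X_pow (by omega), add_zero, map_one]
  rw [map_mul, ← hprod.modXPow_prod_range htail, ← map_mul, qPochhammer, ← prod_mul_distrib]
  simp only [one_add_tsum_two_smul_mul_one_sub]

theorem modXPow_overpartitionSeries_mul_one_sub_two_mul_altSquareSum (n : ℕ) :
    modXPow (n + 1) (overpartitionSeries R * (1 - 2 * altSquareSum X n)) = 1 := by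
  set π : R⟦X⟧ →+* _ := modXPow (n + 1)
  set P := qPochhammer (X : R⟦X⟧) (2 * n)
  set odd := ∏ j ∈ range n, (1 - (X : R⟦X⟧) ^ (2 * j + 1))
  set even : ℕ → R⟦X⟧ := fun M ↦ ∏ i ∈ range M, (1 - X ^ (2 * (i + 1)))
  set E := ∏ i ∈ range (2 * n), (1 + (X : R⟦X⟧) ^ (i + 1))
  have hgauss : π (1 - 2 * altSquareSum X n) = π odd * π P := by
    rw [← map_mul]; exact modXPow_one_sub_two_mul_altSquareSum n
  have hover : π (overpartitionSeries R) * π P = π E := by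
    rw [← map_mul]
    exact modXPow_eq_of_le (by omega) (modXPow_overpartitionSeries_mul_qPochhammer _)
  have hPE : π P * π E = π (even (2 * n)) := by
    rw [← map_mul]; exact congrArg π (qPochhammer_mul_prod_one_add X (2 * n))
  have heven : π (even (2 * n)) = π (even n) :=
    modXPow_prod_range_of_le (by omega) fun i hi ↦ modXPow_one_sub_X_pow (by omega)
  have hsplit : π P = π odd * π (even n) := by
    rw [← map_mul]; exact congrArg π (qPochhammer_two_mul X n)
  have hunit : IsUnit (π P) :=
    (isUnit_iff_constantCoeff.mpr (by simp [P, qPochhammer, map_prod])).map π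
  -- modulo `X^(n+1)`: `(1 - 2a) O P ≡ odd P E = odd even(2n) ≡ odd even(n) = P`
  refine hunit.mul_left_injective ?_
  dsimp only
  rw [map_mul]
  linear_combination (π (overpartitionSeries R) * π P) * hgauss + (π odd * π P) * hover
    + π odd * (hPE + heven) - hsplit

lemma modXPow_overpartitionSeries_eq_geom_sum {k : ℕ} (hk : (2 : R) ^ k = 0) (n : ℕ) :
    modXPow (n + 1) (overpartitionSeries R)
      = modXPow (n + 1) (∑ j ∈ range k, (2 * altSquareSum X n) ^ j) := by
  have h := modXPow_overpartitionSeries_mul_one_sub_two_mul_altSquareSum (R := R) n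
  have hgeom : (∑ j ∈ range k, (2 * altSquareSum (X : R⟦X⟧) n) ^ j)
      * (1 - 2 * altSquareSum X n) = 1 := by
    rw [geom_sum_mul_neg, mul_pow, ← map_ofNat C, ← map_pow, hk, map_zero, zero_mul, sub_zero]
  rw [map_mul] at h
  have hgeom' := congrArg (modXPow (n + 1)) hgeom
  rw [map_mul, map_one] at hgeom'
  linear_combination (-modXPow (n + 1) (overpartitionSeries R)) * hgeom'
    + modXPow (n + 1) (∑ j ∈ range k, (2 * altSquareSum (X : R⟦X⟧) n) ^ j) * h

lemma coeff_overpartitionSeries_pow (t n : ℕ) :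
    coeff n (overpartitionSeries R ^ t) = (overpartitionTuples t n : R) := by
  rw [← Fin.prod_const, coeff_prod_fin]
  simp [overpartitionTuples, overpartitionSeries]

lemma exists_eq_sq_of_coeff_altSquareSum_ne_zero {m n : ℕ}
    (h : coeff m (altSquareSum (X : R⟦X⟧) n) ≠ 0) : ∃ k, m = k ^ 2 := by
  rw [altSquareSum, map_sum] at h
  obtain ⟨k, -, hk⟩ := exists_ne_zero_of_sum_ne_zero h
  refine ⟨k, ?_⟩
  by_contra hm
  rw [show (-1 : R⟦X⟧) ^ (k + 1) = C ((-1) ^ (k + 1)) by simp, coeff_C_mul_X_pow, if_neg hm] at hk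
  exact hk rfl

lemma coeff_altSquareSum_pow_eq_zero {N n j : ℕ} (hN : N % 8 = 7) (hj : j ≤ 3) :
    coeff N (altSquareSum (X : R⟦X⟧) n ^ j) = 0 := by
  by_contra h
  rw [← Fin.prod_const, coeff_prod_fin] at h
  obtain ⟨c, hc, hne⟩ := exists_ne_zero_of_sum_ne_zero h
  choose k hk using fun i ↦
    exists_eq_sq_of_coeff_altSquareSum_ne_zero fun h0 ↦ hne (prod_eq_zero (mem_univ i) h0)
  rw [Nat.mem_antidiagonalTuple] at hc
  interval_cases j
  · simp at hc; omega
  · simp only [Fin.sum_univ_one, hk] at hc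
    have := Nat.sq_mod_eight (k 0); omega
  · simp only [Fin.sum_univ_two, hk] at hc
    have := Nat.sq_mod_eight (k 0); have := Nat.sq_mod_eight (k 1); omega
  · simp only [Fin.sum_univ_three, hk] at hc
    have := Nat.sq_mod_eight (k 0); have := Nat.sq_mod_eight (k 1)
    have := Nat.sq_mod_eight (k 2); omega

lemma coeff_mul_self_two_mul_add_one (f : R⟦X⟧) (m : ℕ) :
    coeff (2 * m + 1) (f * f) = 2 * ∑ i ∈ range (m + 1), coeff i f * coeff (2 * m + 1 - i) f := by
  have hreflect : ∑ i ∈ range (m + 1), coeff (m + 1 + i) f * coeff (2 * m + 1 - (m + 1 + i)) f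
      = ∑ i ∈ range (m + 1), coeff i f * coeff (2 * m + 1 - i) f := by
    rw [← sum_range_reflect (fun i ↦ coeff i f * coeff (2 * m + 1 - i) f)]
    refine sum_congr rfl fun i hi ↦ ?_
    have hi := mem_range.mp hi
    rw [mul_comm, show m + 1 - 1 - i = m - i by omega,
      show 2 * m + 1 - (m - i) = m + 1 + i by omega, show 2 * m + 1 - (m + 1 + i) = m - i by omega]
  rw [coeff_mul, Finset.Nat.sum_antidiagonal_eq_sum_range_succ_mk,
    show (2 * m + 1).succ = (m + 1) + (m + 1) by omega, sum_range_add]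
  dsimp only
  rw [hreflect]
  ring

lemma coeff_two_mul_altSquareSum_pow_eq_zero {N n : ℕ} (hN : N % 8 = 7) (j : ℕ) :
    coeff N ((2 * altSquareSum (X : (ZMod 32)⟦X⟧) n) ^ j) = 0 := by
  rw [mul_pow, ← map_ofNat C, ← map_pow, coeff_C_mul]
  rcases lt_trichotomy j 4 with hj | rfl | hj
  · rw [coeff_altSquareSum_pow_eq_zero hN (by omega), mul_zero]
  · obtain ⟨m, rfl⟩ : ∃ m, N = 2 * m + 1 := ⟨N / 2, by omega⟩
    rw [show altSquareSum (X : (ZMod 32)⟦X⟧) n ^ 4 = altSquareSum X n ^ 2 * altSquareSum X n ^ 2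
      by ring, coeff_mul_self_two_mul_add_one, ← mul_assoc,
      show (2 : ZMod 32) ^ 4 * 2 = 0 by decide, zero_mul]
  · rw [pow_eq_zero_of_le hj (by decide : (2 : ZMod 32) ^ 5 = 0), zero_mul]

lemma coeff_geom_sum_pow_eq_zero {x : R⟦X⟧} {N : ℕ} (hx : ∀ i, coeff N (x ^ i) = 0) (k s : ℕ) :
    coeff N ((∑ j ∈ range k, x ^ j) ^ s) = 0 := by
  suffices ∀ i, coeff N (x ^ i * (∑ j ∈ range k, x ^ j) ^ s) = 0 by simpa using this 0
  induction s with
  | zero => simpa using hx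
  | succ s ih =>
    intro i
    rw [pow_succ, mul_sum, mul_sum, map_sum]
    refine sum_eq_zero fun j _ ↦ ?_
    rw [show x ^ i * ((∑ j ∈ range k, x ^ j) ^ s * x ^ j)
      = x ^ (i + j) * (∑ j ∈ range k, x ^ j) ^ s by ring, ih]

end

theorem overpartitionTuples_eight_n_seven_mod_thirtytwo (t n : ℕ) :
    overpartitionTuples t (8 * n + 7) ≡ 0 [MOD 32] := by
  have hO := modXPow_overpartitionSeries_eq_geom_sum (R := ZMod 32) (k := 5) (by decide)
    (8 * n + 7)
  have hOt : modXPow (8 * n + 7 + 1) (overpartitionSeries (ZMod 32) ^ t)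
      = modXPow _ ((∑ j ∈ range 5, (2 * altSquareSum X (8 * n + 7)) ^ j) ^ t) := by
    rw [map_pow, map_pow, hO]
  have hcoeff := modXPow_eq_iff.mp hOt (8 * n + 7) (by omega)
  rw [coeff_overpartitionSeries_pow, coeff_geom_sum_pow_eq_zero
    (coeff_two_mul_altSquareSum_pow_eq_zero (by omega))] at hcoeff
  exact Nat.modEq_zero_iff_dvd.mpr ((ZMod.natCast_eq_zero_iff _ 32).mp hcoeff)
end

section
/- For all integers i ≥ 1, j ≥ 1, all positive integers k not divisible by 2 or 3, and all n ≥ 0, the number of overpartition (3^i·2^j·k)-tuples with odd parts satisfies OPT̄_{3^i·2^j·k}(3n+1) ≡ 0 (mod 3^i·2^{j+1}). -/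
/-!
Let `G` be a group of order `M = 3 ^ i * 2 ^ j`. Since the generating function of `(M k)`-tuples
is the `M`-th power of that of `k`-tuples, `OPT̄_{Mk}(N)` is a sum over `c : G → ℕ` of total
weight `N` of `∏ g, OPT̄_k(c g)`, and `G` acts on these `c` by translation, preserving the summand.
If the stabiliser of `c` has order `u`, then `c` is constant on its cosets, so `u` divides `N`
and the number of nonzero entries of `c`. As `3 ∤ N`, `u = 2 ^ a`, so the orbit of `c` has
`3 ^ i * 2 ^ (j - a)` elements, while the at least `2 ^ a` nonzero entries each contribute an even
factor `OPT̄_k(c g)`. Since `2 ^ a ≥ a + 1`, every orbit contributes a multiple of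
`3 ^ i * 2 ^ (j + 1)`.
-/

/-- The number of overpartitions of `n` into odd parts: a partition of `n` into odd
parts together with a choice of which distinct part values are overlined. -/
def overpartitionOddCount (n : ℕ) : ℕ :=
  ∑ p ∈ Nat.Partition.odds n, 2 ^ p.parts.toFinset.card

/-- The number of overpartition `k`-tuples of `n` with odd parts. -/
def overpartitionOddTuples (k n : ℕ) : ℕ :=
  ∑ c ∈ Finset.Nat.antidiagonalTuple k n, ∏ i, overpartitionOddCount (c i)

open Finset MulAction PowerSeries

theorem PowerSeries.coeff_pow_card {R ι : Type*} [CommSemiring R] [Fintype ι] [DecidableEq ι]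
    (φ : R⟦X⟧) (n : ℕ) :
    coeff n (φ ^ Fintype.card ι) = ∑ c ∈ piAntidiag (univ : Finset ι) n, ∏ i, coeff (c i) φ := by
  rw [← card_univ, ← prod_const, coeff_prod, finsuppAntidiag, sum_map,
    ← sum_attach (piAntidiag univ n)]
  rfl

theorem Finset.pow_card_filter_ne_zero_dvd_prod {ι R : Type*} [Fintype ι] [CommMonoid R]
    {F : ℕ → R} {a : R} (hF : ∀ m, a ∣ F (m + 1)) (c : ι → ℕ) :
    a ^ #{i | c i ≠ 0} ∣ ∏ i, F (c i) := by
  rw [← prod_filter_mul_prod_filter_not univ (fun i => c i ≠ 0), ← prod_const]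
  refine dvd_mul_of_dvd_left (prod_dvd_prod_of_dvd _ _ fun i hi => ?_) _
  obtain ⟨m, hm⟩ := Nat.exists_eq_succ_of_ne_zero (mem_filter.mp hi).2
  rw [hm]
  exact hF m

theorem MulAction.dvd_sum_of_dvd_ncard_orbit_mul {G α : Type*} [Group G] [Fintype G]
    [MulAction G α] [DecidableEq α] {S : Finset α} (hS : ∀ g : G, ∀ x ∈ S, g • x ∈ S)
    {f : α → ℕ} (hf : ∀ (g : G) x, f (g • x) = f x) {m : ℕ}
    (h : ∀ x ∈ S, m ∣ (orbit G x).ncard * f x) : m ∣ ∑ x ∈ S, f x := by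
  induction S using Finset.strongInduction with
  | H S ih =>
  obtain rfl | ⟨x, hx⟩ := S.eq_empty_or_nonempty
  · simp
  let O : Finset α := univ.image fun g : G => g • x
  have hmemO {y : α} : y ∈ O ↔ y ∈ orbit G x := by simp [O, mem_orbit_iff]
  have hOS : O ⊆ S := by
    intro y hy
    obtain ⟨g, rfl⟩ := mem_orbit_iff.mp (hmemO.mp hy)
    exact hS g x hx
  have hsumO : ∑ y ∈ O, f y = (orbit G x).ncard * f x := by
    have : (O : Set α) = orbit G x := Set.ext fun y => hmemO
    rw [← this, Set.ncard_coe_finset, ← smul_eq_mul, ← sum_const]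
    refine sum_congr rfl fun y hy => ?_
    obtain ⟨g, rfl⟩ := mem_orbit_iff.mp (hmemO.mp hy)
    exact hf g x
  have hrest : m ∣ ∑ y ∈ S \ O, f y := by
    refine ih _ (sdiff_ssubset hOS ⟨x, hmemO.mpr (mem_orbit_self x)⟩) (fun g y hy => ?_)
      (fun y hy => h y (sdiff_subset hy))
    rw [mem_sdiff, hmemO] at hy ⊢
    exact ⟨hS g y hy.1, by rw [← orbit_eq_iff, orbit_smul, orbit_eq_iff]; exact hy.2⟩
  rw [← sum_sdiff hOS, hsumO]
  exact dvd_add hrest (h x hx)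

theorem Subgroup.card_dvd_sum_of_forall_mul_eq {G : Type*} [Group G] [Fintype G]
    (H : Subgroup G) {f : G → ℕ} (hf : ∀ h ∈ H, ∀ g, f (h * g) = f g) :
    Nat.card H ∣ ∑ g, f g := by
  classical
  refine dvd_sum_of_dvd_ncard_orbit_mul (G := H) (fun _ _ _ => mem_univ _)
    (fun h g => hf h h.2 g) fun g _ => dvd_mul_of_dvd_left (dvd_of_eq ?_) _
  exact (Set.ncard_range_of_injective fun h h' e => Subtype.ext (mul_right_cancel e)).symm

section

attribute [local instance] arrowAction

theorem dvd_ncard_orbit_mul_prod {G : Type*} [Group G] [Fintype G]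
    {p s j : ℕ} (hp : p.Prime) (hG : Nat.card G = s * p ^ j) {F : ℕ → ℕ}
    (hF : ∀ m, p ∣ F (m + 1)) {c : G → ℕ} (hsc : s.Coprime (∑ g, c g)) (hc : c ≠ 0) :
    s * p ^ (j + 1) ∣ (orbit G c).ncard * ∏ g, F (c g) := by
  set H := stabilizer G c
  have hinv : ∀ h ∈ H, ∀ g, c (h * g) = c g := fun h hh g => by
    have : c (h⁻¹⁻¹ * g) = c g := congrFun (mem_stabilizer_iff.mp (H.inv_mem hh)) g
    rwa [inv_inv] at this
  have hH_sum : Nat.card H ∣ ∑ g, c g := H.card_dvd_sum_of_forall_mul_eq hinv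
  have hH_supp : Nat.card H ∣ #{g | c g ≠ 0} := by
    rw [card_filter]
    exact H.card_dvd_sum_of_forall_mul_eq fun h hh g => by rw [hinv h hh]
  have hsupp_pos : 0 < #{g | c g ≠ 0} := by
    obtain ⟨g, hg⟩ := Function.ne_iff.mp hc
    exact card_pos.mpr ⟨g, mem_filter.mpr ⟨mem_univ g, hg⟩⟩
  obtain ⟨a, ha, hHa⟩ : ∃ a ≤ j, Nat.card H = p ^ a := by
    have hHs : (Nat.card H).Coprime s := (hsc.coprime_dvd_right hH_sum).symm
    exact (Nat.dvd_prime_pow hp).mp (hHs.dvd_of_dvd_mul_left (hG ▸ H.card_subgroup_dvd_card))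
  have horbit : (orbit G c).ncard = s * p ^ (j - a) := by
    have h := H.card_mul_index
    rw [index_stabilizer, hHa, hG, ← Nat.sub_add_cancel ha, pow_add, ← mul_assoc, mul_comm] at h
    exact Nat.eq_of_mul_eq_mul_right (pow_pos hp.pos a) h
  have hexp : j + 1 ≤ j - a + p ^ a := by
    have := Nat.lt_pow_self (n := a) hp.one_lt
    omega
  calc s * p ^ (j + 1) ∣ s * p ^ (j - a) * p ^ p ^ a := by
        rw [mul_assoc, ← pow_add]
        exact mul_dvd_mul_left s (pow_dvd_pow p hexp)
    _ ∣ (orbit G c).ncard * ∏ g, F (c g) := by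
        rw [horbit]
        refine mul_dvd_mul_left _ ((pow_dvd_pow p ?_).trans (pow_card_filter_ne_zero_dvd_prod hF c))
        exact Nat.le_of_dvd hsupp_pos (hHa ▸ hH_supp)

theorem dvd_sum_piAntidiag_prod {G : Type*} [Group G] [Fintype G] [DecidableEq G]
    {p s j N : ℕ} (hp : p.Prime) (hG : Nat.card G = s * p ^ j) (hsN : s.Coprime N) (hN : N ≠ 0)
    {F : ℕ → ℕ} (hF : ∀ m, p ∣ F (m + 1)) :
    s * p ^ (j + 1) ∣ ∑ c ∈ piAntidiag (univ : Finset G) N, ∏ g, F (c g) := by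
  refine dvd_sum_of_dvd_ncard_orbit_mul (G := G) (fun g c hc => ?_) (fun g c => ?_) fun c hc => ?_
  · rw [mem_piAntidiag] at hc ⊢
    exact ⟨(Equiv.sum_comp (Equiv.mulLeft g⁻¹) c).trans hc.1, fun _ _ => mem_univ _⟩
  · exact Equiv.prod_comp (Equiv.mulLeft g⁻¹) (fun x => F (c x))
  · have hsum : ∑ g, c g = N := (mem_piAntidiag.mp hc).1
    refine dvd_ncard_orbit_mul_prod hp hG hF (hsum ▸ hsN) ?_
    rintro rfl
    simp [eq_comm, hN] at hsum

end

theorem two_dvd_overpartitionOddCount_succ (m : ℕ) : 2 ∣ overpartitionOddCount (m + 1) := by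
  refine dvd_sum fun p _ => dvd_pow_self 2 fun hcard => ?_
  have hparts : p.parts = 0 := by simpa using card_eq_zero.mp hcard
  simpa [hparts] using p.parts_sum

theorem two_dvd_overpartitionOddTuples_succ (k m : ℕ) : 2 ∣ overpartitionOddTuples k (m + 1) := by
  refine dvd_sum fun c hc => ?_
  have hpos : 0 < #{i | c i ≠ 0} := by
    obtain ⟨i, hi⟩ : ∃ i, c i ≠ 0 := by
      by_contra! h
      simp [h, Nat.mem_antidiagonalTuple] at hc
    exact card_pos.mpr ⟨i, mem_filter.mpr ⟨mem_univ i, hi⟩⟩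
  exact (dvd_pow_self 2 hpos.ne').trans
    (pow_card_filter_ne_zero_dvd_prod two_dvd_overpartitionOddCount_succ c)

theorem overpartitionOddTuples_eq_coeff (k n : ℕ) :
    overpartitionOddTuples k n = coeff n (mk overpartitionOddCount ^ k) := by
  conv_rhs => rw [← Fintype.card_fin k, coeff_pow_card, piAntidiag_univ_fin_eq_antidiagonalTuple]
  simp only [coeff_mk, overpartitionOddTuples]

theorem overpartitionOddTuples_mul_eq_sum {G : Type*} [Fintype G] [DecidableEq G] {M : ℕ}
    (hG : Nat.card G = M) (k N : ℕ) :
    overpartitionOddTuples (M * k) N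
      = ∑ c ∈ piAntidiag (univ : Finset G) N, ∏ g, overpartitionOddTuples k (c g) := by
  rw [overpartitionOddTuples_eq_coeff, pow_mul', ← hG, Nat.card_eq_fintype_card, coeff_pow_card]
  simp only [overpartitionOddTuples_eq_coeff]

theorem overpartitionOddTuples_three_n_one_general (i j k n : ℕ) :
    overpartitionOddTuples (3 ^ i * 2 ^ j * k) (3 * n + 1) ≡ 0 [MOD 3 ^ i * 2 ^ (j + 1)] := by
  have : NeZero (3 ^ i * 2 ^ j) := ⟨by positivity⟩
  have hG : Nat.card (Multiplicative (ZMod (3 ^ i * 2 ^ j))) = 3 ^ i * 2 ^ j := by simp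
  have hcop : (3 ^ i).Coprime (3 * n + 1) :=
    Nat.Coprime.pow_left i ((Nat.coprime_mul_left_add_right 3 1 n).mpr (Nat.coprime_one_right 3))
  rw [Nat.modEq_zero_iff_dvd, overpartitionOddTuples_mul_eq_sum hG]
  exact dvd_sum_piAntidiag_prod Nat.prime_two hG hcop (Nat.succ_ne_zero _)
    (two_dvd_overpartitionOddTuples_succ k)

theorem overpartitionOddTuples_three_n_one (i j k n : ℕ) (hi : 1 ≤ i) (hj : 1 ≤ j)
    (hk : 0 < k) (hk2 : ¬ (2 ∣ k)) (hk3 : ¬ (3 ∣ k)) :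
    overpartitionOddTuples (3 ^ i * 2 ^ j * k) (3 * n + 1) ≡ 0 [MOD 3 ^ i * 2 ^ (j + 1)] :=
  overpartitionOddTuples_three_n_one_general i j k n
end

section
/- For all integers i ≥ 1, all positive integers j that are odd, not divisible by 3, and not a power of 2, and all n ≥ 0, the number of overpartition (3^i·j)-tuples with odd parts satisfies OPT̄_{3^i·j}(3n+1) ≡ 0 (mod 3^i·2). -/
/-!
Over `ℤ`, Frobenius gives `φ ^ p ≡ φ(X ^ p) (mod p)` for every power series `φ`, and raising a
congruence mod `p` to the `p ^ i`-th power makes it a congruence mod `p ^ (i + 1)`. Hence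
`φ ^ p ^ (i + 1) ≡ φ(X ^ p) ^ p ^ i (mod p ^ (i + 1))`, and the right side has no monomial `X ^ n`
with `p ∤ n`. Applied with `p = 3` to the `j`-th power of the generating function `G` of
overpartitions into odd parts, this gives the factor `3 ^ i`. The factor `2` holds because
`G ≡ 1 (mod 2)`: a nonempty overpartition has a part value that can be overlined or not.
-/

namespace PowerSeries

section CommSemiring

variable {R : Type*} [CommSemiring R]

theorem coeff_pow_eq_sum_antidiagonalTuple (φ : R⟦X⟧) (k n : ℕ) :
    coeff n (φ ^ k) = ∑ c ∈ Finset.Nat.antidiagonalTuple k n, ∏ i, coeff (c i) φ := by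
  classical
  rw [← Fin.prod_const, coeff_prod]
  refine Finset.sum_nbij' (fun l => ⇑l) (fun c => Finsupp.equivFunOnFinite.symm c) ?_ ?_
    (fun l _ => Finsupp.equivFunOnFinite_symm_coe l) (fun _ _ => rfl) (fun _ _ => rfl)
  · intro l hl
    simpa [Finset.Nat.mem_antidiagonalTuple] using hl
  · intro c hc
    simpa [Finset.Nat.mem_antidiagonalTuple] using hc

theorem dvd_coeff_pow_of_dvd_coeff {φ : R⟦X⟧} {a : R} (h : ∀ m ≠ 0, a ∣ coeff m φ) (k : ℕ)
    {n : ℕ} (hn : n ≠ 0) : a ∣ coeff n (φ ^ k) := by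
  induction k generalizing n with
  | zero => simp [coeff_one, hn]
  | succ k ih =>
    rw [pow_succ, coeff_mul]
    refine Finset.dvd_sum fun x hx => ?_
    rcases eq_or_ne x.2 0 with h2 | h2
    · have h1 : x.1 ≠ 0 := by
        rw [Finset.HasAntidiagonal.mem_antidiagonal] at hx
        omega
      exact (ih h1).mul_right _
    · exact (h _ h2).mul_left _

theorem C_dvd_iff_dvd_coeff (φ : R⟦X⟧) (a : R) : C a ∣ φ ↔ ∀ n, a ∣ coeff n φ := by
  constructor
  · rintro ⟨ψ, rfl⟩ n
    rw [coeff_C_mul]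
    exact dvd_mul_right _ _
  · intro h
    choose b hb using h
    exact ⟨mk b, by ext n; rw [coeff_C_mul, coeff_mk, ← hb]⟩

end CommSemiring

section Prime

variable {p : ℕ} [hp : Fact p.Prime]

theorem expand_eq_pow_zmod (φ : (ZMod p)⟦X⟧) : expand p hp.out.ne_zero φ = φ ^ p := by
  ext n
  symm
  -- the `n`-th coefficient only sees the truncation of `φ` below `n + 1`, a polynomial, for which
  -- this is `ZMod.expand_card`
  have hlt : n < n + 1 := n.lt_succ_self
  rw [← coeff_coe_trunc_of_lt hlt, ← trunc_trunc_pow, coeff_coe_trunc_of_lt hlt,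
    ← Polynomial.coe_pow, ← ZMod.expand_card, Polynomial.coeff_coe,
    Polynomial.coeff_expand hp.out.pos, coeff_expand]
  split_ifs
  · rw [coeff_trunc, if_pos (Nat.lt_succ_of_le (Nat.div_le_self n p))]
  · rfl

theorem natCast_dvd_pow_sub_expand (φ : ℤ⟦X⟧) :
    (p : ℤ⟦X⟧) ∣ φ ^ p - expand p hp.out.ne_zero φ := by
  rw [← map_natCast C, C_dvd_iff_dvd_coeff]
  intro n
  rw [← ZMod.intCast_zmod_eq_zero_iff_dvd, ← eq_intCast (Int.castRingHom (ZMod p)),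
    ← coeff_map, map_sub, map_pow, map_expand, expand_eq_pow_zmod, sub_self, map_zero]

theorem prime_pow_dvd_coeff_pow_prime_pow (φ : ℤ⟦X⟧) (i : ℕ) {n : ℕ} (hn : ¬ p ∣ n) :
    (p : ℤ) ^ i ∣ coeff n (φ ^ p ^ i) := by
  cases i with
  | zero => simp
  | succ i =>
    have hlift := dvd_sub_pow_of_dvd_sub (p := p) (natCast_dvd_pow_sub_expand φ) i
    rw [← map_natCast C, ← map_pow, ← pow_mul, ← pow_succ', ← map_pow,
      C_dvd_iff_dvd_coeff] at hlift
    specialize hlift n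
    rwa [map_sub, coeff_expand_of_not_dvd _ _ _ hn, sub_zero] at hlift

end Prime

end PowerSeries

open PowerSeries

theorem two_dvd_overpartitionOddCount {m : ℕ} (hm : m ≠ 0) : 2 ∣ overpartitionOddCount m := by
  refine Finset.dvd_sum fun π _ => dvd_pow_self 2 ?_
  rw [Ne, Finset.card_eq_zero, Multiset.toFinset_eq_empty]
  intro hπ
  exact hm (by simpa [hπ] using π.parts_sum.symm)

noncomputable def overpartitionOddSeries : ℤ⟦X⟧ :=
  mk fun n => (overpartitionOddCount n : ℤ)

theorem coeff_overpartitionOddSeries_pow (k n : ℕ) :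
    coeff n (overpartitionOddSeries ^ k) = overpartitionOddTuples k n := by
  simp [coeff_pow_eq_sum_antidiagonalTuple, overpartitionOddTuples, overpartitionOddSeries]

theorem overpartitionOddTuples_odd_three_n_one_general (i j n : ℕ) :
    overpartitionOddTuples (3 ^ i * j) (3 * n + 1) ≡ 0 [MOD 3 ^ i * 2] := by
  have h3 : 3 ^ i ∣ overpartitionOddTuples (3 ^ i * j) (3 * n + 1) := by
    have := prime_pow_dvd_coeff_pow_prime_pow (p := 3) (overpartitionOddSeries ^ j) i
      (n := 3 * n + 1) (by omega)
    rw [← pow_mul', coeff_overpartitionOddSeries_pow] at this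
    exact_mod_cast this
  have h2 : 2 ∣ overpartitionOddTuples (3 ^ i * j) (3 * n + 1) := by
    have := dvd_coeff_pow_of_dvd_coeff (φ := overpartitionOddSeries) (a := 2)
      (fun m hm => by
        rw [overpartitionOddSeries, coeff_mk]
        exact_mod_cast two_dvd_overpartitionOddCount hm)
      (3 ^ i * j) (n := 3 * n + 1) (by omega)
    rw [coeff_overpartitionOddSeries_pow] at this
    exact_mod_cast this
  exact Nat.modEq_zero_iff_dvd.2 ((Nat.Coprime.pow_left i (by decide)).mul_dvd_of_dvd_of_dvd h3 h2)

theorem overpartitionOddTuples_odd_three_n_one (i j n : ℕ) (hi : 1 ≤ i) (hj : 0 < j)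
    (hjodd : Odd j) (hj3 : ¬ (3 ∣ j)) (hjpow : ¬ ∃ m : ℕ, j = 2 ^ m) :
    overpartitionOddTuples (3 ^ i * j) (3 * n + 1) ≡ 0 [MOD 3 ^ i * 2] :=
  overpartitionOddTuples_odd_three_n_one_general i j n
end
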